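/- arXiv:2511.06504 — 4 statements merged into one kernel-verified Lean document; each statement's English description precedes it below -/
import Mathlib

section
/- If α ∈ [0,1] is a lower bound for the approximation ratio of the Ranking greedy matching algorithm on all graphs admitting a perfect matching, then α is also a lower bound for the approximation ratio of Ranking on arbitrary graphs. -/
open List

variable {V : Type*}

/-- Whether vertex `u` is an endpoint of some edge in the partial matching `M`. -/
def isMatchedL [DecidableEq V] (M : List (V × V)) (u : V) : Bool :=
  M.any (fun p => p.1 = u || p.2 = u)

/-- One step of the Ranking algorithm: process vertex `u`.  If `u` is not forbidden and
not yet matched, it is matched to the first available neighbor in the order `order`. -/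
def rankingStepF [DecidableEq V] (G : SimpleGraph V) [DecidableRel G.Adj]
    (forbidden : List V) (order : List V) (M : List (V × V)) (u : V) : List (V × V) :=
  if u ∈ forbidden ∨ isMatchedL M u = true then M
  else
    match order.find? (fun w =>
        decide (G.Adj u w) && !(decide (w ∈ forbidden)) && !isMatchedL M w) with
    | some w => (u, w) :: M
    | none => M

/-- Partial matching of Ranking after processing the first `t` vertices of `order`. -/
def rankingPartialF [DecidableEq V] (G : SimpleGraph V) [DecidableRel G.Adj]
    (forbidden order : List V) (t : ℕ) : List (V × V) :=
  (order.take t).foldl (rankingStepF G forbidden order) []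

/-- The matching output by Ranking on the permutation given by the list `order`. -/
def rankingList [DecidableEq V] (G : SimpleGraph V) [DecidableRel G.Adj]
    (order : List V) : List (V × V) :=
  order.foldl (rankingStepF G [] order) []

/-- `u` is matched to `v` in the output of Ranking on `order`. -/
def matchedTo [DecidableEq V] (G : SimpleGraph V) [DecidableRel G.Adj]
    (order : List V) (u v : V) : Prop :=
  (u, v) ∈ rankingList G order ∨ (v, u) ∈ rankingList G order

/-- `u` is matched in the output of Ranking on `order`. -/
def isMatchedInRanking [DecidableEq V] (G : SimpleGraph V) [DecidableRel G.Adj]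
    (order : List V) (u : V) : Prop :=
  ∃ v, matchedTo G order u v

/-- The set of (unordered) edges of a list of matched pairs. -/
def matchEdges (L : List (V × V)) : Set (Sym2 V) := {e | ∃ p ∈ L, e = s(p.1, p.2)}
/-- `M` is a matching on the graph `G`. -/
def IsMatchingOn {V : Type*} (G : SimpleGraph V) (M : Set (Sym2 V)) : Prop :=
  M ⊆ G.edgeSet ∧ ∀ e₁ ∈ M, ∀ e₂ ∈ M, e₁ ≠ e₂ → ∀ v : V, v ∈ e₁ → v ∉ e₂

/-- `M` is a perfect matching on `G`: a matching covering every vertex. -/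
def IsPerfectMatchingOn {V : Type*} (G : SimpleGraph V) (M : Set (Sym2 V)) : Prop :=
  IsMatchingOn G M ∧ ∀ v : V, ∃ e ∈ M, v ∈ e

/-- The list of vertices in increasing rank order given by the bijection `e`. -/
def orderOfEquiv {V : Type*} [Fintype V] (e : V ≃ Fin (Fintype.card V)) : List V :=
  (List.finRange (Fintype.card V)).map e.symm

/-- The expected size of the matching output by Ranking on a uniformly random
permutation of the vertices of `G`. -/
noncomputable def expectedRankingSize {V : Type*} [Fintype V] [DecidableEq V]
    (G : SimpleGraph V) [DecidableRel G.Adj] : ℝ :=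
  (∑ e : V ≃ Fin (Fintype.card V), ((rankingList G (orderOfEquiv e)).length : ℝ)) /
    (Fintype.card (V ≃ Fin (Fintype.card V)) : ℝ)


/-!
Let `s` be the set of vertices covered by the matching `M`. Pulled back to the induced subgraph
`G[s]`, `M` is a perfect matching of the same size, so the hypothesis gives
`α |M| ≤ E[Ranking(G[s])]`. A uniformly random ranking of `V` restricts to a uniformly random
ranking of `s`, and Ranking on `G[s]` under the restricted ranking behaves exactly like Ranking on
`G` started with the vertices outside `s` already marked as matched. It remains to see that
marking vertices as matched beforehand never enlarges Ranking's output. Ranking only depends on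
the set of unmatched vertices, and the runs started from `a` and `a \ {x}` stay coupled: at every
step their unmatched sets differ in at most one vertex (the end of an alternating path), and the
first run has matched as many edges as the second when that vertex is unmatched in the first run,
one more when it is unmatched in the second.
-/

lemma List.find?_eq_or_eq_some_of_le {α : Type*} {l : List α} {p q : α → Bool} {x : α}
    (hle : ∀ y, q y = true → p y = true) (hagree : ∀ y, y ≠ x → p y = q y) :
    l.find? p = l.find? q ∨ (l.find? p = some x ∧ q x = false) := by
  induction l with
  | nil => exact Or.inl rfl
  | cons y l ih =>
    by_cases hqy : q y
    · exact Or.inl (by simp [hqy, hle y hqy])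
    by_cases hyx : y = x
    · subst hyx
      cases hpy : p y
      · simpa [List.find?_cons, hpy, hqy] using ih
      · simp_all
    · simpa [List.find?_cons, hqy, hagree y hyx] using ih

section Greedy

variable (r : V → V → Prop) (ord : List V)

open Classical in
noncomputable def rankingPartner (a : Set V) (u : V) : Option V :=
  if u ∈ a then ord.find? (fun w => decide (r u w ∧ w ∈ a)) else none

/-- Ranking's step, with the partial matching abstracted to its set `s.1` of unmatched vertices
and its number `s.2` of edges. -/
noncomputable def rankingCountStep (s : Set V × ℕ) (u : V) : Set V × ℕ :=
  match rankingPartner r ord s.1 u with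
  | some w => (s.1 \ {u, w}, s.2 + 1)
  | none => s

variable {r ord}

lemma rankingPartner_of_notMem {a : Set V} {u : V} (hu : u ∉ a) :
    rankingPartner r ord a u = none := if_neg hu

lemma mem_of_rankingPartner_eq_some {a : Set V} {u w : V}
    (h : rankingPartner r ord a u = some w) : u ∈ a := by
  by_contra hu
  simp [rankingPartner, hu] at h

lemma rankingPartner_of_mem {a : Set V} {u : V} (hu : u ∈ a) {P : V → Bool}
    (hP : ∀ w, P w = true ↔ r u w ∧ w ∈ a) : rankingPartner r ord a u = ord.find? P := by
  classical
  rw [rankingPartner, if_pos hu]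
  congr 1
  funext w
  exact Bool.eq_iff_iff.mpr (by simp [hP])

lemma rankingPartner_eq_or_eq_some {a b : Set V} {x u : V} (h : a ∈ Set.Icc b (insert x b))
    (hub : u ∈ b) :
    rankingPartner r ord a u = rankingPartner r ord b u ∨
      (rankingPartner r ord a u = some x ∧ x ∉ b) := by
  classical
  rw [rankingPartner_of_mem hub (fun _ => decide_eq_true_iff),
    rankingPartner_of_mem (h.1 hub) (fun _ => decide_eq_true_iff)]
  refine (List.find?_eq_or_eq_some_of_le (x := x) ?_ ?_).imp id (fun hx => ⟨hx.1, ?_⟩)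
  · intro y hy
    simp only [decide_eq_true_eq] at hy ⊢
    exact ⟨hy.1, h.1 hy.2⟩
  · intro y hyx
    have hab : y ∈ a ↔ y ∈ b := ⟨fun hy => (h.2 hy).resolve_left hyx, fun hy => h.1 hy⟩
    simp [hab]
  · have hx' := List.find?_some hx.1
    simp only [decide_eq_true_eq] at hx'
    simpa [hx'.1] using hx.2

lemma rankingCountStep_of_none {a : Set V} {m : ℕ} {u : V}
    (h : rankingPartner r ord a u = none) :
    rankingCountStep r ord (a, m) u = (a, m) := by
  simp [rankingCountStep, h]

lemma rankingCountStep_of_some {a : Set V} {m : ℕ} {u w : V}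
    (h : rankingPartner r ord a u = some w) :
    rankingCountStep r ord (a, m) u = (a \ {u, w}, m + 1) := by
  simp [rankingCountStep, h]

lemma rankingCountStep_coupled {A B : Set V × ℕ} {x : V}
    (h : A.1 ∈ Set.Icc B.1 (insert x B.1)) (u : V) :
    let A' := rankingCountStep r ord A u
    let B' := rankingCountStep r ord B u
    (∃ y, A'.1 ∈ Set.Icc B'.1 (insert y B'.1)) ∧ A'.2 + B.2 = B'.2 + A.2 ∨
      (∃ y, B'.1 ∈ Set.Icc A'.1 (insert y A'.1)) ∧ A'.2 + B.2 = B'.2 + A.2 + 1 := by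
  obtain ⟨a, m⟩ := A
  obtain ⟨b, n⟩ := B
  dsimp only
  obtain ⟨hba, hab⟩ := h
  by_cases hub : u ∈ b
  · rcases rankingPartner_eq_or_eq_some (r := r) (ord := ord) ⟨hba, hab⟩ hub with
      heq | ⟨ha, hxb⟩
    · cases hb : rankingPartner r ord b u with
      | none =>
        rw [rankingCountStep_of_none hb, rankingCountStep_of_none (heq.trans hb)]
        exact Or.inl ⟨⟨x, hba, hab⟩, by omega⟩
      | some w =>
        rw [rankingCountStep_of_some hb, rankingCountStep_of_some (heq.trans hb)]
        exact Or.inl ⟨⟨x, by grind⟩, by omega⟩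
    · rw [rankingCountStep_of_some ha]
      cases hb : rankingPartner r ord b u with
      | none =>
        rw [rankingCountStep_of_none hb]
        exact Or.inr ⟨⟨u, by grind⟩, by omega⟩
      | some w =>
        rw [rankingCountStep_of_some hb]
        exact Or.inl ⟨⟨w, by grind⟩, by omega⟩
  · rw [rankingCountStep_of_none (rankingPartner_of_notMem hub)]
    cases ha : rankingPartner r ord a u with
    | none =>
      rw [rankingCountStep_of_none ha]
      exact Or.inl ⟨⟨x, hba, hab⟩, by omega⟩
    | some w =>
      have hux : u = x := (hab (mem_of_rankingPartner_eq_some ha)).resolve_right hub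
      rw [rankingCountStep_of_some ha]
      exact Or.inr ⟨⟨w, by grind⟩, by omega⟩

def RankingCoupled (A B : Set V × ℕ) : Prop :=
  (∃ x, A.1 ∈ Set.Icc B.1 (insert x B.1)) ∧ A.2 = B.2 ∨
    (∃ x, B.1 ∈ Set.Icc A.1 (insert x A.1)) ∧ A.2 = B.2 + 1

lemma RankingCoupled.step {A B : Set V × ℕ} (h : RankingCoupled A B) (u : V) :
    RankingCoupled (rankingCountStep r ord A u) (rankingCountStep r ord B u) := by
  rcases h with ⟨⟨x, hx⟩, hAB⟩ | ⟨⟨x, hx⟩, hAB⟩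
  · rcases rankingCountStep_coupled (r := r) (ord := ord) hx u with ⟨hy, hc⟩ | ⟨hy, hc⟩
    · exact Or.inl ⟨hy, by omega⟩
    · exact Or.inr ⟨hy, by omega⟩
  · rcases rankingCountStep_coupled (r := r) (ord := ord) hx u with ⟨hy, hc⟩ | ⟨hy, hc⟩
    · exact Or.inr ⟨hy, by omega⟩
    · exact Or.inl ⟨hy, by omega⟩

lemma RankingCoupled.foldl {A B : Set V × ℕ} (h : RankingCoupled A B) (l : List V) :
    RankingCoupled (l.foldl (rankingCountStep r ord) A) (l.foldl (rankingCountStep r ord) B) := by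
  induction l generalizing A B with
  | nil => exact h
  | cons u l ih => exact ih (h.step u)

lemma RankingCoupled.snd_le {A B : Set V × ℕ} (h : RankingCoupled A B) : B.2 ≤ A.2 := by
  rcases h with ⟨-, h⟩ | ⟨-, h⟩ <;> omega

lemma foldl_rankingCountStep_sdiff_singleton_le (l : List V) (a : Set V) (x : V) (n : ℕ) :
    (l.foldl (rankingCountStep r ord) (a \ {x}, n)).2 ≤
      (l.foldl (rankingCountStep r ord) (a, n)).2 :=
  (RankingCoupled.foldl (A := (a, n)) (B := (a \ {x}, n)) (Or.inl ⟨⟨x, by grind⟩, rfl⟩) l).snd_le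

lemma foldl_rankingCountStep_mono {a b : Set V} (hba : b ⊆ a) (hfin : (a \ b).Finite)
    (l : List V) (n : ℕ) :
    (l.foldl (rankingCountStep r ord) (b, n)).2 ≤
      (l.foldl (rankingCountStep r ord) (a, n)).2 := by
  suffices ∀ t : Set V, t.Finite →
      (l.foldl (rankingCountStep r ord) (a \ t, n)).2 ≤
        (l.foldl (rankingCountStep r ord) (a, n)).2 by
    simpa [Set.sdiff_sdiff_cancel_left hba] using this _ hfin
  intro t ht
  induction t, ht using Set.Finite.induction_on with
  | empty => simp
  | @insert x t _ _ ih =>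
    rw [Set.insert_eq, Set.union_comm, ← Set.sdiff_sdiff]
    exact (foldl_rankingCountStep_sdiff_singleton_le l _ x n).trans ih

end Greedy

section RankingList

variable [DecidableEq V] (G : SimpleGraph V) [DecidableRel G.Adj]

lemma rankingCountStep_unmatched (ord : List V) (M : List (V × V)) (u : V) :
    rankingCountStep G.Adj ord ({w | isMatchedL M w = false}, M.length) u =
      ({w | isMatchedL (rankingStepF G [] ord M u) w = false},
        (rankingStepF G [] ord M u).length) := by
  by_cases hu : isMatchedL M u = true
  · rw [rankingCountStep_of_none (rankingPartner_of_notMem (by simpa using hu)),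
      rankingStepF, if_pos (Or.inr hu)]
  have hpartner : rankingPartner G.Adj ord {w | isMatchedL M w = false} u =
      ord.find? fun w =>
        decide (G.Adj u w) && !decide (w ∈ ([] : List V)) && !isMatchedL M w :=
    rankingPartner_of_mem (by simpa using hu) (fun w => by simp)
  rw [rankingStepF, if_neg (by simpa using hu)]
  cases hw : ord.find? (fun w =>
      decide (G.Adj u w) && !decide (w ∈ ([] : List V)) && !isMatchedL M w) with
  | none => rw [rankingCountStep_of_none (hpartner.trans hw)]
  | some w =>
    rw [rankingCountStep_of_some (hpartner.trans hw), List.length_cons]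
    congr 1
    ext y
    grind [isMatchedL]

lemma length_rankingList_eq_foldl_rankingCountStep (ord : List V) :
    (rankingList G ord).length = (ord.foldl (rankingCountStep G.Adj ord) (Set.univ, 0)).2 := by
  have hinit : (Set.univ, 0) = ({w : V | isMatchedL ([] : List (V × V)) w = false},
      ([] : List (V × V)).length) := by
    simp [isMatchedL]
  rw [hinit, List.foldl_hom (fun M : List (V × V) => ({w | isMatchedL M w = false}, M.length))
    (rankingCountStep_unmatched G ord), rankingList]

end RankingList

section Induce

variable {s : Set V}

lemma rankingCountStep_image_val_of_notMem (r : V → V → Prop) (ord : List V) (A : Set s × ℕ)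
    {u : V} (hu : u ∉ s) :
    rankingCountStep r ord (Prod.map (Set.image Subtype.val) id A) u =
      Prod.map (Set.image Subtype.val) id A :=
  rankingCountStep_of_none (rankingPartner_of_notMem fun ⟨u', _, hu'⟩ => hu (hu' ▸ u'.2))

variable (s) [DecidablePred (· ∈ s)]

def toSubtypeOption (x : V) : Option s := if h : x ∈ s then some ⟨x, h⟩ else none

variable {s}

lemma toSubtypeOption_of_mem {x : V} (h : x ∈ s) : toSubtypeOption s x = some ⟨x, h⟩ :=
  dif_pos h

lemma toSubtypeOption_of_notMem {x : V} (h : x ∉ s) : toSubtypeOption s x = none := dif_neg h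

lemma val_eq_of_mem_toSubtypeOption {x : V} {w : s} (h : w ∈ toSubtypeOption s x) :
    (w : V) = x := by
  by_cases hx : x ∈ s
  · rw [toSubtypeOption_of_mem hx, Option.mem_some_iff] at h
    rw [← h]
  · simp [toSubtypeOption_of_notMem hx] at h

lemma toSubtypeOption_ofSubtype (q : Equiv.Perm s) (x : V) :
    toSubtypeOption s (Equiv.Perm.ofSubtype q x) = (toSubtypeOption s x).map q := by
  by_cases hx : x ∈ s
  · rw [Equiv.Perm.ofSubtype_apply_of_mem q hx, toSubtypeOption_of_mem (q ⟨x, hx⟩).2,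
      toSubtypeOption_of_mem hx, Option.map_some]
  · rw [Equiv.Perm.ofSubtype_apply_of_not_mem q hx, toSubtypeOption_of_notMem hx,
      Option.map_none]

variable (G : SimpleGraph V) [DecidableRel G.Adj]

lemma rankingPartner_image_val (ord : List V) (a : Set s) (u : s) :
    rankingPartner G.Adj ord (Subtype.val '' a) u =
      (rankingPartner (G.induce s).Adj (ord.filterMap (toSubtypeOption s)) a u).map
        Subtype.val := by
  classical
  by_cases hu : u ∈ a
  · let P : V → Bool := fun w =>
      (toSubtypeOption s w).any fun w' => decide ((G.induce s).Adj u w' ∧ w' ∈ a)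
    have hP : ∀ w, P w = true ↔ G.Adj u w ∧ w ∈ Subtype.val '' a := by
      intro w
      by_cases hw : w ∈ s
      · simp [P, toSubtypeOption_of_mem hw, hw]
      · simp [P, toSubtypeOption_of_notMem hw, hw]
    rw [rankingPartner_of_mem hu (fun _ => decide_eq_true_iff), List.find?_filterMap,
      rankingPartner_of_mem (Set.mem_image_of_mem _ hu) hP]
    cases hw : ord.find? P with
    | none => rfl
    | some w =>
      have hws : w ∈ s := by
        by_contra hws
        simpa [P, toSubtypeOption_of_notMem hws] using List.find?_some hw
      simp [toSubtypeOption_of_mem hws]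
  · rw [rankingPartner_of_notMem hu,
      rankingPartner_of_notMem (Subtype.val_injective.mem_set_image.not.mpr hu), Option.map_none]

lemma rankingCountStep_image_val_of_mem (ord : List V) (A : Set s × ℕ) {u : V} (hu : u ∈ s) :
    rankingCountStep G.Adj ord (Prod.map (Set.image Subtype.val) id A) u =
      Prod.map (Set.image Subtype.val) id
        (rankingCountStep (G.induce s).Adj (ord.filterMap (toSubtypeOption s)) A ⟨u, hu⟩) := by
  obtain ⟨a, n⟩ := A
  have hpartner := rankingPartner_image_val G ord a ⟨u, hu⟩
  cases hp : rankingPartner (G.induce s).Adj (ord.filterMap (toSubtypeOption s)) a ⟨u, hu⟩ with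
  | none =>
    rw [hp] at hpartner
    rw [Prod.map_apply, rankingCountStep_of_none hpartner, rankingCountStep_of_none hp]
    rfl
  | some w =>
    rw [hp] at hpartner
    rw [Prod.map_apply, rankingCountStep_of_some hpartner, rankingCountStep_of_some hp]
    simp [Set.image_sdiff Subtype.val_injective, Set.image_insert_eq]

lemma foldl_rankingCountStep_image_val (ord l : List V) (A : Set s × ℕ) :
    l.foldl (rankingCountStep G.Adj ord) (Prod.map (Set.image Subtype.val) id A) =
      Prod.map (Set.image Subtype.val) id ((l.filterMap (toSubtypeOption s)).foldl
        (rankingCountStep (G.induce s).Adj (ord.filterMap (toSubtypeOption s))) A) := by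
  induction l generalizing A with
  | nil => rfl
  | cons u l ih =>
    by_cases hu : u ∈ s
    · rw [List.filterMap_cons, toSubtypeOption_of_mem hu, List.foldl_cons, List.foldl_cons,
        rankingCountStep_image_val_of_mem G ord A hu, ih]
    · rw [List.filterMap_cons, toSubtypeOption_of_notMem hu, List.foldl_cons,
        rankingCountStep_image_val_of_notMem G.Adj ord A hu, ih]

lemma length_rankingList_induce_le [DecidableEq V] [Finite V] (ord : List V) :
    (rankingList (G.induce s) (ord.filterMap (toSubtypeOption s))).length ≤
      (rankingList G ord).length := by
  rw [length_rankingList_eq_foldl_rankingCountStep, length_rankingList_eq_foldl_rankingCountStep]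
  have hsim := congrArg Prod.snd
    (foldl_rankingCountStep_image_val G ord ord ((Set.univ : Set s), 0))
  simp only [Prod.map_apply, Prod.map_snd, id, Set.image_univ, Subtype.range_coe_subtype] at hsim
  rw [← hsim]
  exact foldl_rankingCountStep_mono (Set.subset_univ _) (Set.toFinite _) ord 0

end Induce

lemma sum_comp_div_card_eq_of_fiber_equiv {X Y : Type*} [Fintype X] [Fintype Y] [Nonempty X]
    (Ψ : X → Y) (hfib : ∀ y₁ y₂, ∃ φ : X ≃ X, ∀ x, Ψ (φ x) = y₂ ↔ Ψ x = y₁) (f : Y → ℝ) :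
    (∑ x, f (Ψ x)) / Fintype.card X = (∑ y, f y) / Fintype.card Y := by
  classical
  obtain ⟨x₀⟩ := ‹Nonempty X›
  set K := (Finset.univ.filter fun x => Ψ x = Ψ x₀).card with hK
  have hcard : ∀ y, (Finset.univ.filter fun x => Ψ x = y).card = K := by
    intro y
    obtain ⟨φ, hφ⟩ := hfib y (Ψ x₀)
    simp only [hK, ← Fintype.card_subtype]
    exact Fintype.card_congr (φ.subtypeEquiv fun x => (hφ x).symm)
  have hK0 : (K : ℝ) ≠ 0 := by
    rw [Nat.cast_ne_zero, ← pos_iff_ne_zero]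
    exact Finset.card_pos.mpr ⟨x₀, by simp⟩
  have hsum : ∑ x, f (Ψ x) = K * ∑ y, f y := by
    rw [← Finset.sum_fiberwise Finset.univ Ψ, Finset.mul_sum]
    refine Finset.sum_congr rfl fun y _ => ?_
    rw [Finset.sum_congr rfl fun x hx => by rw [(Finset.mem_filter.mp hx).2], Finset.sum_const,
      hcard, nsmul_eq_mul]
  have hX : (Fintype.card X : ℝ) = K * Fintype.card Y := by
    rw [← Finset.card_univ, Finset.card_eq_sum_card_fiberwise (f := Ψ) (t := Finset.univ)
      (fun _ _ => Finset.mem_coe.mpr (Finset.mem_univ _))]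
    simp [hcard, mul_comm]
  rw [hsum, hX, mul_div_mul_left _ _ hK0]

section InducedRanking

variable [Fintype V]

lemma orderOfEquiv_injective : Function.Injective (orderOfEquiv (V := V)) := by
  intro e₁ e₂ h
  have hsymm : e₁.symm = e₂.symm :=
    Equiv.ext fun i => List.map_inj_left.mp h i (List.mem_finRange i)
  simpa using congrArg Equiv.symm hsymm

lemma orderOfEquiv_perm_trans (f : Equiv.Perm V) (e : V ≃ Fin (Fintype.card V)) :
    orderOfEquiv (f.trans e) = (orderOfEquiv e).map f.symm := by
  simp [orderOfEquiv, List.map_map, Function.comp_def]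

lemma nodup_orderOfEquiv (e : V ≃ Fin (Fintype.card V)) : (orderOfEquiv e).Nodup :=
  (List.nodup_finRange _).map e.symm.injective

lemma mem_orderOfEquiv (e : V ≃ Fin (Fintype.card V)) (x : V) : x ∈ orderOfEquiv e :=
  List.mem_map.mpr ⟨e x, List.mem_finRange _, e.symm_apply_apply x⟩

variable {s : Set V} [DecidablePred (· ∈ s)]

lemma nodup_filterMap_toSubtypeOption (e : V ≃ Fin (Fintype.card V)) :
    ((orderOfEquiv e).filterMap (toSubtypeOption s)).Nodup :=
  (nodup_orderOfEquiv e).filterMap fun _ _ _ hx hy =>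
    (val_eq_of_mem_toSubtypeOption hx).symm.trans (val_eq_of_mem_toSubtypeOption hy)

lemma mem_filterMap_toSubtypeOption (e : V ≃ Fin (Fintype.card V)) (x : s) :
    x ∈ (orderOfEquiv e).filterMap (toSubtypeOption s) :=
  List.mem_filterMap.mpr ⟨x, mem_orderOfEquiv e x, toSubtypeOption_of_mem x.2⟩

variable [DecidableEq V]

lemma length_filterMap_toSubtypeOption (e : V ≃ Fin (Fintype.card V)) :
    ((orderOfEquiv e).filterMap (toSubtypeOption s)).length = Fintype.card s := by
  simpa using Fintype.card_congr (List.Nodup.getEquivOfForallMemList _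
    (nodup_filterMap_toSubtypeOption (s := s) e) (mem_filterMap_toSubtypeOption e))

noncomputable def inducedRanking (e : V ≃ Fin (Fintype.card V)) : s ≃ Fin (Fintype.card s) :=
  (List.Nodup.getEquivOfForallMemList _ (nodup_filterMap_toSubtypeOption e)
    (mem_filterMap_toSubtypeOption e)).symm.trans (finCongr (length_filterMap_toSubtypeOption e))

lemma orderOfEquiv_inducedRanking (e : V ≃ Fin (Fintype.card V)) :
    orderOfEquiv (inducedRanking (s := s) e) =
      (orderOfEquiv e).filterMap (toSubtypeOption s) := by
  apply List.ext_getElem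
  · simp [orderOfEquiv.eq_def (inducedRanking e), length_filterMap_toSubtypeOption]
  · intro i h₁ h₂
    simp only [orderOfEquiv, List.getElem_map, List.getElem_finRange, inducedRanking,
      Equiv.symm_trans_apply, Equiv.symm_symm]
    rfl

lemma inducedRanking_ofSubtype_symm_trans (q : Equiv.Perm s) (e : V ≃ Fin (Fintype.card V)) :
    inducedRanking ((Equiv.Perm.ofSubtype q).symm.trans e) = q.symm.trans (inducedRanking e) := by
  apply orderOfEquiv_injective
  rw [orderOfEquiv_inducedRanking, orderOfEquiv_perm_trans, orderOfEquiv_perm_trans,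
    orderOfEquiv_inducedRanking, Equiv.symm_symm, Equiv.symm_symm, List.filterMap_map,
    List.map_filterMap]
  congr 1
  funext x
  exact toSubtypeOption_ofSubtype q x

lemma sum_inducedRanking_div_card (f : (s ≃ Fin (Fintype.card s)) → ℝ) :
    (∑ e : V ≃ Fin (Fintype.card V), f (inducedRanking e)) /
        Fintype.card (V ≃ Fin (Fintype.card V)) =
      (∑ t, f t) / Fintype.card (s ≃ Fin (Fintype.card s)) := by
  have : Nonempty (V ≃ Fin (Fintype.card V)) := ⟨Fintype.equivFin V⟩
  refine sum_comp_div_card_eq_of_fiber_equiv _ (fun t₁ t₂ => ?_) f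
  set q := t₁.trans t₂.symm
  refine ⟨Equiv.equivCongr (Equiv.Perm.ofSubtype q) (Equiv.refl _), fun e => ?_⟩
  change inducedRanking (((Equiv.Perm.ofSubtype q).symm.trans e).trans (Equiv.refl _)) = t₂ ↔ _
  rw [Equiv.trans_refl, inducedRanking_ofSubtype_symm_trans, Equiv.trans_cancel_left]
  simp [q, Equiv.trans_assoc]

end InducedRanking

lemma expectedRankingSize_induce_le [Fintype V] [DecidableEq V] (G : SimpleGraph V)
    [DecidableRel G.Adj] (s : Set V) [DecidablePred (· ∈ s)] :
    expectedRankingSize (G.induce s) ≤ expectedRankingSize G := by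
  rw [expectedRankingSize, expectedRankingSize, ← sum_inducedRanking_div_card
    (fun t => ((rankingList (G.induce s) (orderOfEquiv t)).length : ℝ))]
  gcongr with e
  rw [orderOfEquiv_inducedRanking]
  exact_mod_cast length_rankingList_induce_le G (orderOfEquiv e)

section Matching

variable {G : SimpleGraph V} {M : Set (Sym2 V)}

lemma IsMatchingOn.preimage_induce (hM : IsMatchingOn G M) (s : Set V) :
    IsMatchingOn (G.induce s) (Sym2.map Subtype.val ⁻¹' M) := by
  refine ⟨fun e he => (SimpleGraph.Embedding.induce s).map_mem_edgeSet_iff.mp (hM.1 he),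
    fun e₁ he₁ e₂ he₂ hne v hv₁ hv₂ => ?_⟩
  exact hM.2 _ he₁ _ he₂ ((Sym2.map.injective Subtype.val_injective).ne hne) v
    (Sym2.mem_map.mpr ⟨v, hv₁, rfl⟩) (Sym2.mem_map.mpr ⟨v, hv₂, rfl⟩)

lemma subset_range_sym2Map_val_coveredVertices :
    M ⊆ Set.range (Sym2.map (Subtype.val : {x | ∃ e ∈ M, x ∈ e} → V)) := by
  intro e he
  induction e using Sym2.ind with
  | _ a b =>
    exact ⟨s(⟨a, _, he, Sym2.mem_mk_left a b⟩, ⟨b, _, he, Sym2.mem_mk_right a b⟩), rfl⟩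

lemma IsMatchingOn.isPerfectMatchingOn_induce_coveredVertices (hM : IsMatchingOn G M) :
    IsPerfectMatchingOn (G.induce {x | ∃ e ∈ M, x ∈ e}) (Sym2.map Subtype.val ⁻¹' M) := by
  refine ⟨hM.preimage_induce _, fun v => ?_⟩
  obtain ⟨e, he, hve⟩ := v.2
  obtain ⟨e', rfl⟩ := subset_range_sym2Map_val_coveredVertices he
  obtain ⟨v', hv', hvv'⟩ := Sym2.mem_map.mp hve
  exact ⟨e', he, Subtype.ext hvv' ▸ hv'⟩

end Matching

theorem stmt4_general (α : ℝ)
    (h : ∀ (W : Type) [Fintype W] [DecidableEq W] (G : SimpleGraph W) [DecidableRel G.Adj],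
        (∃ M : Set (Sym2 W), IsPerfectMatchingOn G M) →
        ∀ M : Set (Sym2 W), IsMatchingOn G M → α * M.ncard ≤ expectedRankingSize G) :
    ∀ (W : Type) [Fintype W] [DecidableEq W] (G : SimpleGraph W) [DecidableRel G.Adj],
        ∀ M : Set (Sym2 W), IsMatchingOn G M → α * M.ncard ≤ expectedRankingSize G := by
  intro W _ _ G _ M hM
  classical
  let s : Set W := {x | ∃ e ∈ M, x ∈ e}
  have hperfect := hM.isPerfectMatchingOn_induce_coveredVertices
  calc α * M.ncard = α * (Sym2.map Subtype.val ⁻¹' M : Set (Sym2 s)).ncard := by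
        rw [Set.ncard_preimage_of_injective_subset_range
          (Sym2.map.injective Subtype.val_injective) subset_range_sym2Map_val_coveredVertices]
    _ ≤ expectedRankingSize (G.induce s) := h s _ ⟨_, hperfect⟩ _ hperfect.1
    _ ≤ expectedRankingSize G := expectedRankingSize_induce_le G s

/-- If `α ∈ [0,1]` lower-bounds the approximation ratio of Ranking (expected matching
size at least `α` times the size of any matching, hence of a maximum matching) on every
graph admitting a perfect matching, then it does so on every graph. -/
theorem stmt4 (α : ℝ) (hα : α ∈ Set.Icc (0 : ℝ) 1)
    (h : ∀ (W : Type) [Fintype W] [DecidableEq W] (G : SimpleGraph W) [DecidableRel G.Adj],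
        (∃ M : Set (Sym2 W), IsPerfectMatchingOn G M) →
        ∀ M : Set (Sym2 W), IsMatchingOn G M → α * M.ncard ≤ expectedRankingSize G) :
    ∀ (W : Type) [Fintype W] [DecidableEq W] (G : SimpleGraph W) [DecidableRel G.Adj],
        ∀ M : Set (Sym2 W), IsMatchingOn G M → α * M.ncard ≤ expectedRankingSize G :=
  stmt4_general α h
end

section
/- Alternating path lemma with timestamps: Let σ be a permutation of V, σ_{-u*} the induced permutation with u* removed (treated as u* marked unavailable from the start), and t a timestamp in the greedy probing process. Then (1) R^t(σ) ⊕ R^t(σ_{-u*}) is an alternating path (u₀,…,u_k) with u₀ = u*, alternating between the two partial matchings starting with R^t(σ); (2) σ(u_i) < σ(u_{i+2}) for all i ≤ k−2; and (3) the sets of available vertices satisfy A^t(σ) ⊕ A^t(σ_{-u*}) = {u_k}. -/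
open List

variable {V : Type*}

/-- The list of probes of the greedy probing view: pairs `(u, v)` in increasing
lexicographic order of ranks. -/
def probeList (order : List V) : List (V × V) :=
  order.flatMap fun u => order.map fun v => (u, v)

/-- The partial matching after the first `t` probes, with the vertices in `forbidden`
marked unavailable from the start. -/
def probePartial [DecidableEq V] (G : SimpleGraph V) [DecidableRel G.Adj]
    (forbidden order : List V) (t : ℕ) : List (V × V) :=
  ((probeList order).take t).foldl
    (fun M p =>
      if (decide (G.Adj p.1 p.2) && !decide (p.1 ∈ forbidden) && !decide (p.2 ∈ forbidden)
          && !isMatchedL M p.1 && !isMatchedL M p.2) = true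
      then p :: M else M) []

/-- The set of available vertices after the first `t` probes. -/
def probeAvail [DecidableEq V] (G : SimpleGraph V) [DecidableRel G.Adj]
    (forbidden order : List V) (t : ℕ) : Set V :=
  {x | x ∈ order ∧ x ∉ forbidden ∧ isMatchedL (probePartial G forbidden order t) x = false}

/-
Induction on the timestamp `t`. The invariant (`IsAltPath`) says that `R^t(σ) ⊕ R^t(σ₋ᵤ*)` is
an alternating path `p 0 = u*, …, p m` whose `i`-th edge lies in `R^t(σ)` for even `i` and in
`R^t(σ₋ᵤ*)` for odd `i`, and that the two available sets agree except at `p m`, which is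
available only in the run that owns the next path edge. So the available set of the other run is
contained in that of the owning run: a probe is accepted by both runs, by neither, or by the
owning run alone. The first two cases keep the path; in the third the probe must contain `p m`,
and its other endpoint extends the path by one edge.

Probes run in lexicographic order of ranks, and an accepted probe `(a, b)` always has
`σ(a) < σ(b)`, since otherwise `(b, a)` would have been accepted earlier. Comparing the
timestamps of the last two path edges gives `σ(u_i) < σ(u_{i+2})`.
-/

lemma Nat.lt_of_min_mul_add_max_lt {n a b c : ℕ}
    (h : min a b * n + max a b < min b c * n + max b c) : a < c := by
  rcases le_total a b with hab | hab <;> rcases le_total b c with hbc | hbc <;>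
    simp only [hab, hbc, min_eq_left, min_eq_right, max_eq_left, max_eq_right] at h
  all_goals nlinarith

lemma List.getElem?_flatMap_map_pair {α β : Type*} (l₁ : List α) (l₂ : List β) {i j : ℕ}
    (hi : i < l₁.length) (hj : j < l₂.length) :
    (l₁.flatMap fun a => l₂.map fun b => (a, b))[i * l₂.length + j]? = some (l₁[i], l₂[j]) := by
  induction l₁ generalizing i with
  | nil => simp at hi
  | cons a l ih =>
    cases i with
    | zero => simp [List.getElem?_append_left, hj]
    | succ i =>
      rw [List.flatMap_cons, List.getElem?_append_right (by simp; nlinarith)]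
      simpa [Nat.succ_mul, Nat.add_right_comm] using ih (by simpa using hi)

namespace Set

variable {α : Type*} {a : α} {s t : Set α}

lemma symmDiff_insert_insert_of_notMem (hs : a ∉ s) (ht : a ∉ t) :
    symmDiff (insert a s) (insert a t) = symmDiff s t := by
  ext x
  by_cases hx : x = a <;> simp_all [mem_symmDiff]

lemma insert_symmDiff_of_notMem (hs : a ∉ s) (ht : a ∉ t) :
    symmDiff (insert a s) t = insert a (symmDiff s t) := by
  ext x
  by_cases hx : x = a <;> simp_all [mem_symmDiff]

lemma insert_sdiff_pair_insert_of_notMem_of_mem {b : α} (ha : a ∉ s) (hb : b ∈ s) :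
    insert b (insert a s \ {a, b}) = s := by
  ext x
  grind

lemma insert_symmDiff_self_of_notMem (hs : a ∉ s) : symmDiff (insert a s) s = {a} := by
  ext x
  by_cases hx : x = a <;> simp_all [mem_symmDiff]

end Set

/-- The forbidden list of the run whose partial matching owns the `i`-th edge of the alternating
path: `[]` (the run on `σ`) for even `i`, `[ustar]` (the run on `σ₋ᵤ*`) for odd `i`. -/
def altRun (ustar : V) (i : ℕ) : List V := if Even i then [] else [ustar]

lemma altRun_add_one_add_one (ustar : V) (i : ℕ) : altRun ustar (i + 1 + 1) = altRun ustar i := by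
  simp [altRun, Nat.even_add_one]

lemma altRun_eq_or (ustar : V) (i m : ℕ) :
    altRun ustar i = altRun ustar m ∨ altRun ustar i = altRun ustar (m + 1) := by
  by_cases hi : Even i <;> by_cases hm : Even m <;> simp [altRun, Nat.even_add_one, hi, hm]

lemma symmDiff_altRun {α : Type*} (f : List V → Set α) (ustar : V) (i : ℕ) :
    symmDiff (f (altRun ustar i)) (f (altRun ustar (i + 1))) = symmDiff (f []) (f [ustar]) := by
  by_cases h : Even i <;> simp [altRun, Nat.even_add_one, h, symmDiff_comm]

def pathEdges (p : ℕ → V) (m : ℕ) : Set (Sym2 V) := {e | ∃ i < m, e = s(p i, p (i + 1))}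

def extendPath (p : ℕ → V) (m : ℕ) (w : V) (i : ℕ) : V := if i ≤ m then p i else w

section extendPath

variable {p : ℕ → V} {m : ℕ} {w : V}

lemma extendPath_of_le {i : ℕ} (hi : i ≤ m) : extendPath p m w i = p i := if_pos hi

lemma extendPath_add_one : extendPath p m w (m + 1) = w := if_neg (by omega)

lemma pathEdges_extendPath :
    pathEdges (extendPath p m w) (m + 1) = insert s(p m, w) (pathEdges p m) := by
  ext e
  simp only [pathEdges, Set.mem_insert_iff, Set.mem_ofPred_eq]
  constructor
  · rintro ⟨i, hi, rfl⟩
    rcases Nat.lt_succ_iff_lt_or_eq.mp hi with hi | rfl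
    · exact .inr ⟨i, hi, by rw [extendPath_of_le hi.le, extendPath_of_le hi]⟩
    · exact .inl (by rw [extendPath_of_le le_rfl, extendPath_add_one])
  · rintro (rfl | ⟨i, hi, rfl⟩)
    · exact ⟨m, m.lt_succ_self, by rw [extendPath_of_le le_rfl, extendPath_add_one]⟩
    · exact ⟨i, hi.trans m.lt_succ_self, by rw [extendPath_of_le hi.le, extendPath_of_le hi]⟩

lemma injOn_extendPath (hp : ∀ i ≤ m, ∀ j ≤ m, p i = p j → i = j) (hw : ∀ i ≤ m, p i ≠ w) :
    ∀ i ≤ m + 1, ∀ j ≤ m + 1, extendPath p m w i = extendPath p m w j → i = j := by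
  have eq_last : ∀ i ≤ m + 1, extendPath p m w i = w → i = m + 1 := fun i hi h => by
    by_contra hne
    exact hw i (by omega) (by rwa [extendPath_of_le (by omega)] at h)
  intro i hi j hj h
  by_cases hi' : i = m + 1
  · rw [hi', extendPath_add_one] at h
    rw [hi', eq_last j hj h.symm]
  by_cases hj' : j = m + 1
  · rw [hj', extendPath_add_one] at h
    exact absurd (eq_last i hi h) hi'
  rw [extendPath_of_le (by omega), extendPath_of_le (by omega)] at h
  exact hp i (by omega) j (by omega) h

end extendPath

lemma matchEdges_cons (q : V × V) (M : List (V × V)) :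
    matchEdges (q :: M) = insert s(q.1, q.2) (matchEdges M) := by
  ext e
  simp [matchEdges]

lemma probeList_length (order : List V) :
    (probeList order).length = order.length * order.length := by
  simp [probeList, List.length_flatMap, List.map_const', List.sum_replicate]

lemma mem_order_of_getElem?_probeList {order : List V} {t : ℕ} {q : V × V}
    (hq : (probeList order)[t]? = some q) :
    q.1 ∈ order ∧ q.2 ∈ order := by
  obtain ⟨a, ha, b, hb, rfl⟩ := by
    simpa only [probeList, List.mem_flatMap, List.mem_map] using List.mem_of_getElem? hq
  exact ⟨ha, hb⟩

section Probing

variable [DecidableEq V] {G : SimpleGraph V} [DecidableRel G.Adj] {F order : List V} {t : ℕ}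
  {q : V × V}

variable (G F order t q) in
def Accepts : Prop :=
  G.Adj q.1 q.2 ∧ q.1 ∈ probeAvail G F order t ∧ q.2 ∈ probeAvail G F order t

lemma probePartial_succ_of_getElem?_eq_none (hq : (probeList order)[t]? = none) :
    probePartial G F order (t + 1) = probePartial G F order t := by
  simp [probePartial, List.take_add_one, hq]

lemma probePartial_succ_eq_ite (hq : (probeList order)[t]? = some q) :
    probePartial G F order (t + 1) =
      if (decide (G.Adj q.1 q.2) && !decide (q.1 ∈ F) && !decide (q.2 ∈ F)
          && !isMatchedL (probePartial G F order t) q.1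
          && !isMatchedL (probePartial G F order t) q.2) = true
      then q :: probePartial G F order t else probePartial G F order t := by
  rw [probePartial, List.take_add_one, hq, List.foldl_append]
  rfl

lemma probePartial_succ_of_accepts (hq : (probeList order)[t]? = some q)
    (h : Accepts G F order t q) :
    probePartial G F order (t + 1) = q :: probePartial G F order t := by
  obtain ⟨hadj, ⟨-, h1F, h1⟩, ⟨-, h2F, h2⟩⟩ := h
  simp [probePartial_succ_eq_ite hq, hadj, h1F, h2F, h1, h2]

lemma probePartial_succ_of_not_accepts (hq : (probeList order)[t]? = some q)
    (h : ¬ Accepts G F order t q) :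
    probePartial G F order (t + 1) = probePartial G F order t := by
  obtain ⟨h1, h2⟩ := mem_order_of_getElem?_probeList hq
  simp only [Accepts, probeAvail, Set.mem_ofPred_eq] at h
  simp only [probePartial_succ_eq_ite hq, ite_eq_right_iff]
  intro hc
  simp only [Bool.and_eq_true, decide_eq_true_eq, Bool.not_eq_eq_eq_not, Bool.not_true,
    decide_eq_false_iff_not] at hc
  exact absurd ⟨hc.1.1.1.1, ⟨h1, hc.1.1.1.2, hc.1.2⟩, ⟨h2, hc.1.1.2, hc.2⟩⟩ h

variable (G F order) in
lemma probePartial_succ_eq_or (t : ℕ) :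
    probePartial G F order (t + 1) = probePartial G F order t ∨
      ∃ q, (probeList order)[t]? = some q ∧ Accepts G F order t q ∧
        probePartial G F order (t + 1) = q :: probePartial G F order t := by
  cases hq : (probeList order)[t]? with
  | none => exact .inl (probePartial_succ_of_getElem?_eq_none hq)
  | some q =>
    by_cases h : Accepts G F order t q
    · exact .inr ⟨q, rfl, h, probePartial_succ_of_accepts hq h⟩
    · exact .inl (probePartial_succ_of_not_accepts hq h)

lemma probeAvail_succ_of_accepts (hq : (probeList order)[t]? = some q)
    (h : Accepts G F order t q) :
    probeAvail G F order (t + 1) = probeAvail G F order t \ {q.1, q.2} := by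
  ext x
  simp only [probeAvail, probePartial_succ_of_accepts hq h, isMatchedL, List.any_cons,
    Bool.or_eq_false_iff, decide_eq_false_iff_not, Set.mem_ofPred_eq, Set.mem_sdiff,
    Set.mem_insert_iff, Set.mem_singleton_iff]
  tauto

lemma monotone_matchEdges_probePartial :
    Monotone fun t => matchEdges (probePartial G F order t) := by
  refine monotone_nat_of_le_succ fun t => ?_
  rcases probePartial_succ_eq_or G F order t with h | ⟨q, -, -, h⟩
  · rw [h]
  · rw [h, matchEdges_cons]
    exact Set.subset_insert _ _

lemma antitone_probeAvail : Antitone (probeAvail G F order) := by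
  refine antitone_nat_of_succ_le fun t => ?_
  rcases probePartial_succ_eq_or G F order t with h | ⟨q, hq, hA, -⟩
  · simp only [probeAvail, h, subset_refl]
  · rw [probeAvail_succ_of_accepts hq hA]
    exact Set.sdiff_subset

lemma notMem_probeAvail_of_mem_matchEdges {x y : V}
    (h : s(x, y) ∈ matchEdges (probePartial G F order t)) : x ∉ probeAvail G F order t := by
  obtain ⟨p, hp, he⟩ := h
  rintro ⟨-, -, hx⟩
  have : isMatchedL (probePartial G F order t) x = true :=
    List.any_eq_true.mpr ⟨p, hp, by
      rcases Sym2.mem_iff.mp (he ▸ Sym2.mem_mk_left x y) with e | e <;> simp [e]⟩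
  simp [hx] at this

variable (order) in
/-- The timestamp at which an edge is probed from its lower-ranked endpoint: the probe
`(order[i], order[j])` comes at position `i * order.length + j` of `probeList order`. -/
def edgeKey : Sym2 V → ℕ :=
  Sym2.lift ⟨fun x y => min (order.idxOf x) (order.idxOf y) * order.length +
    max (order.idxOf x) (order.idxOf y), fun x y => by simp only [min_comm, max_comm]⟩

lemma idxOf_lt_of_edgeKey_lt {x y z : V}
    (h : edgeKey order s(x, y) < edgeKey order s(y, z)) : order.idxOf x < order.idxOf z :=
  Nat.lt_of_min_mul_add_max_lt h

lemma edgeKey_eq_of_accepts (hnd : order.Nodup) (hq : (probeList order)[t]? = some q)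
    (h : Accepts G F order t q) : edgeKey order s(q.1, q.2) = t := by
  set n := order.length
  have ht : t < n * n := probeList_length order ▸ (List.getElem?_eq_some_iff.mp hq).1
  have hn : 0 < n := Nat.pos_of_mul_pos_left (Nat.zero_lt_of_lt ht)
  obtain ⟨i, j, hi, hj, rfl⟩ : ∃ i j, i < n ∧ j < n ∧ i * n + j = t :=
    ⟨t / n, t % n, (Nat.div_lt_iff_lt_mul hn).mpr ht, Nat.mod_lt _ hn, Nat.div_add_mod' t n⟩
  rw [probeList, List.getElem?_flatMap_map_pair _ _ hi hj, Option.some_inj] at hq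
  subst hq
  obtain ⟨hadj, h₁, h₂⟩ := h
  simp only [edgeKey, Sym2.lift_mk, hnd.idxOf_getElem]
  rcases lt_trichotomy i j with hij | rfl | hji
  · rw [min_eq_left hij.le, max_eq_right hij.le]
  · exact absurd rfl hadj.ne
  -- otherwise the reversed pair was probed earlier, at time `j * n + i`, and accepted then
  have hlt : j * n + i < i * n + j := by nlinarith
  have hrev : Accepts G F order (j * n + i) (order[j], order[i]) :=
    ⟨hadj.symm, antitone_probeAvail hlt.le h₂, antitone_probeAvail hlt.le h₁⟩
  have hq' : (probeList order)[j * n + i]? = some (order[j], order[i]) :=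
    List.getElem?_flatMap_map_pair order order hj hi
  have hmem : s(order[j], order[i]) ∈ matchEdges (probePartial G F order (j * n + i + 1)) := by
    rw [probePartial_succ_of_accepts hq' hrev, matchEdges_cons]
    exact Set.mem_insert _ _
  exact absurd h₂ (notMem_probeAvail_of_mem_matchEdges (monotone_matchEdges_probePartial hlt hmem))

lemma edgeKey_lt_of_mem_matchEdges (hnd : order.Nodup) {e : Sym2 V}
    (he : e ∈ matchEdges (probePartial G F order t)) : edgeKey order e < t := by
  induction t with
  | zero => simp [probePartial, matchEdges] at he
  | succ t ih =>
    rcases probePartial_succ_eq_or G F order t with h | ⟨q, hq, hA, h⟩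
    · rw [h] at he
      exact (ih he).trans t.lt_succ_self
    · rw [h, matchEdges_cons] at he
      rcases he with rfl | he
      · rw [edgeKey_eq_of_accepts hnd hq hA]
        exact t.lt_succ_self
      · exact (ih he).trans t.lt_succ_self

variable (G order ustar) in
structure IsAltPath (t m : ℕ) (p : ℕ → V) : Prop where
  zero : p 0 = ustar
  injOn : ∀ i ≤ m, ∀ j ≤ m, p i = p j → i = j
  mem : ∀ i < m, s(p i, p (i + 1)) ∈ matchEdges (probePartial G (altRun ustar i) order t)
  symmDiff_eq : symmDiff (matchEdges (probePartial G (altRun ustar m) order t))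
    (matchEdges (probePartial G (altRun ustar (m + 1)) order t)) = pathEdges p m
  rank : ∀ i, i + 2 ≤ m → order.idxOf (p i) < order.idxOf (p (i + 2))
  avail_eq : probeAvail G (altRun ustar m) order t =
    insert (p m) (probeAvail G (altRun ustar (m + 1)) order t)
  notMem_avail : p m ∉ probeAvail G (altRun ustar (m + 1)) order t

namespace IsAltPath

variable {ustar : V} {m : ℕ} {p : ℕ → V}

lemma accepts_of_accepts_add_one (h : IsAltPath G order ustar t m p)
    (hY : Accepts G (altRun ustar (m + 1)) order t q) : Accepts G (altRun ustar m) order t q := by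
  obtain ⟨hadj, h₁, h₂⟩ := hY
  exact ⟨hadj, h.avail_eq ▸ Set.mem_insert_of_mem _ h₁, h.avail_eq ▸ Set.mem_insert_of_mem _ h₂⟩

lemma succ_of_eq (h : IsAltPath G order ustar t m p)
    (hX : probePartial G (altRun ustar m) order (t + 1) = probePartial G (altRun ustar m) order t)
    (hY : probePartial G (altRun ustar (m + 1)) order (t + 1) =
      probePartial G (altRun ustar (m + 1)) order t) :
    IsAltPath G order ustar (t + 1) m p where
  zero := h.zero
  injOn := h.injOn
  mem i hi := monotone_matchEdges_probePartial t.le_succ (h.mem i hi)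
  symmDiff_eq := by rw [hX, hY, h.symmDiff_eq]
  rank := h.rank
  avail_eq := by simp only [probeAvail, hX, hY]; exact h.avail_eq
  notMem_avail := by simp only [probeAvail, hY]; exact h.notMem_avail

lemma succ_of_accepts (h : IsAltPath G order ustar t m p) (hq : (probeList order)[t]? = some q)
    (hY : Accepts G (altRun ustar (m + 1)) order t q) : IsAltPath G order ustar (t + 1) m p := by
  have hX := h.accepts_of_accepts_add_one hY
  have hpq : p m ∉ ({q.1, q.2} : Set V) := by
    rintro (e | e) <;> exact h.notMem_avail (e ▸ by first | exact hY.2.1 | exact hY.2.2)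
  refine ⟨h.zero, h.injOn, fun i hi => monotone_matchEdges_probePartial t.le_succ (h.mem i hi),
    ?_, h.rank, ?_, ?_⟩
  · rw [probePartial_succ_of_accepts hq hX, probePartial_succ_of_accepts hq hY, matchEdges_cons,
      matchEdges_cons, Set.symmDiff_insert_insert_of_notMem
        (notMem_probeAvail_of_mem_matchEdges · hX.2.1)
        (notMem_probeAvail_of_mem_matchEdges · hY.2.1), h.symmDiff_eq]
  · rw [probeAvail_succ_of_accepts hq hX, probeAvail_succ_of_accepts hq hY, h.avail_eq,
      Set.insert_sdiff_of_notMem _ hpq]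
  · rw [probeAvail_succ_of_accepts hq hY]
    exact fun hm => h.notMem_avail hm.1

lemma exists_eq_mk_of_accepts (h : IsAltPath G order ustar t m p)
    (hX : Accepts G (altRun ustar m) order t q)
    (hY : ¬ Accepts G (altRun ustar (m + 1)) order t q) :
    ∃ w ∈ probeAvail G (altRun ustar (m + 1)) order t, s(q.1, q.2) = s(p m, w) := by
  obtain ⟨hadj, h₁, h₂⟩ := hX
  rw [h.avail_eq] at h₁ h₂
  rcases h₁ with e₁ | h₁ <;> rcases h₂ with e₂ | h₂
  · exact absurd (e₁.trans e₂.symm) hadj.ne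
  · exact ⟨q.2, h₂, by rw [e₁]⟩
  · exact ⟨q.1, h₁, by rw [e₂, Sym2.eq_swap]⟩
  · exact absurd ⟨hadj, h₁, h₂⟩ hY

lemma ne_of_mem_probeAvail (h : IsAltPath G order ustar t m p) {w : V}
    (hwX : w ∈ probeAvail G (altRun ustar m) order t)
    (hwY : w ∈ probeAvail G (altRun ustar (m + 1)) order t) : ∀ i ≤ m, p i ≠ w := by
  intro i hi e
  rcases hi.lt_or_eq with hi | rfl
  · have := notMem_probeAvail_of_mem_matchEdges (h.mem i hi)
    rcases altRun_eq_or ustar i m with hr | hr <;> rw [hr, e] at this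
    exacts [this hwX, this hwY]
  · exact h.notMem_avail (e ▸ hwY)

lemma succ_extendPath (h : IsAltPath G order ustar t m p) (hnd : order.Nodup)
    (hq : (probeList order)[t]? = some q) (hX : Accepts G (altRun ustar m) order t q)
    (hY : ¬ Accepts G (altRun ustar (m + 1)) order t q) {w : V}
    (hwY : w ∈ probeAvail G (altRun ustar (m + 1)) order t) (hqw : s(q.1, q.2) = s(p m, w)) :
    IsAltPath G order ustar (t + 1) (m + 1) (extendPath p m w) := by
  have hwX : w ∈ probeAvail G (altRun ustar m) order t := h.avail_eq ▸ Set.mem_insert_of_mem _ hwY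
  have hEX : matchEdges (probePartial G (altRun ustar m) order (t + 1)) =
      insert s(p m, w) (matchEdges (probePartial G (altRun ustar m) order t)) := by
    rw [probePartial_succ_of_accepts hq hX, matchEdges_cons, hqw]
  have hAX : probeAvail G (altRun ustar m) order (t + 1) =
      probeAvail G (altRun ustar m) order t \ {p m, w} := by
    rw [probeAvail_succ_of_accepts hq hX]
    congr 1
    ext x
    simpa [Sym2.mem_iff] using congrArg (x ∈ ·) hqw
  have hPY := probePartial_succ_of_not_accepts hq hY
  have hAY : probeAvail G (altRun ustar (m + 1)) order (t + 1) =
      probeAvail G (altRun ustar (m + 1)) order t := by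
    simp only [probeAvail, hPY]
  refine ⟨(extendPath_of_le m.zero_le).trans h.zero,
    injOn_extendPath h.injOn (h.ne_of_mem_probeAvail hwX hwY), ?_, ?_, ?_, ?_, ?_⟩
  · intro i hi
    rcases Nat.lt_succ_iff_lt_or_eq.mp hi with hi | rfl
    · rw [extendPath_of_le hi.le, extendPath_of_le hi]
      exact monotone_matchEdges_probePartial t.le_succ (h.mem i hi)
    · rw [extendPath_of_le le_rfl, extendPath_add_one, hEX]
      exact Set.mem_insert _ _
  · rw [altRun_add_one_add_one, hEX, hPY, symmDiff_comm, Set.insert_symmDiff_of_notMem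
      (notMem_probeAvail_of_mem_matchEdges · (h.avail_eq ▸ Set.mem_insert _ _))
      (fun hmem => notMem_probeAvail_of_mem_matchEdges (Sym2.eq_swap ▸ hmem) hwY),
      h.symmDiff_eq, pathEdges_extendPath]
  · intro i hi
    rcases (show i + 2 ≤ m ∨ i + 1 = m by omega) with hi | rfl
    · rw [extendPath_of_le (by omega), extendPath_of_le hi]
      exact h.rank i hi
    · rw [extendPath_of_le (by omega), extendPath_add_one]
      apply idxOf_lt_of_edgeKey_lt (y := p (i + 1))
      rw [← hqw, edgeKey_eq_of_accepts hnd hq hX]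
      exact edgeKey_lt_of_mem_matchEdges hnd (h.mem i i.lt_succ_self)
  · rw [altRun_add_one_add_one, extendPath_add_one, hAX, h.avail_eq, hAY,
      Set.insert_sdiff_pair_insert_of_notMem_of_mem h.notMem_avail hwY]
  · rw [altRun_add_one_add_one, extendPath_add_one, hAX]
    exact fun hw' => hw'.2 (Set.mem_insert_of_mem _ rfl)

lemma exists_succ (h : IsAltPath G order ustar t m p) (hnd : order.Nodup) :
    ∃ m' p', IsAltPath G order ustar (t + 1) m' p' := by
  cases hq : (probeList order)[t]? with
  | none =>
    exact ⟨m, p, h.succ_of_eq (probePartial_succ_of_getElem?_eq_none hq)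
      (probePartial_succ_of_getElem?_eq_none hq)⟩
  | some q =>
    by_cases hY : Accepts G (altRun ustar (m + 1)) order t q
    · exact ⟨m, p, h.succ_of_accepts hq hY⟩
    by_cases hX : Accepts G (altRun ustar m) order t q
    · obtain ⟨w, hwY, hqw⟩ := h.exists_eq_mk_of_accepts hX hY
      exact ⟨m + 1, _, h.succ_extendPath hnd hq hX hY hwY hqw⟩
    · exact ⟨m, p, h.succ_of_eq (probePartial_succ_of_not_accepts hq hX)
        (probePartial_succ_of_not_accepts hq hY)⟩

lemma symmDiff_matchEdges (h : IsAltPath G order ustar t m p) :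
    symmDiff (matchEdges (probePartial G [] order t))
      (matchEdges (probePartial G [ustar] order t)) = pathEdges p m := by
  rw [← symmDiff_altRun (fun F => matchEdges (probePartial G F order t)) ustar m]
  exact h.symmDiff_eq

lemma symmDiff_probeAvail (h : IsAltPath G order ustar t m p) :
    symmDiff (probeAvail G [] order t) (probeAvail G [ustar] order t) = {p m} := by
  rw [← symmDiff_altRun (fun F => probeAvail G F order t) ustar m]
  simp only [h.avail_eq]
  exact Set.insert_symmDiff_self_of_notMem h.notMem_avail

end IsAltPath

lemma isAltPath_zero {ustar : V} (hu : ustar ∈ order) :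
    IsAltPath G order ustar 0 0 fun _ => ustar where
  zero := rfl
  injOn i hi j hj _ := by omega
  mem i hi := absurd hi i.not_lt_zero
  symmDiff_eq := by simp [probePartial, matchEdges, pathEdges]
  rank i hi := by omega
  avail_eq := by
    ext x
    by_cases hx : x = ustar <;> simp [altRun, probeAvail, probePartial, isMatchedL, hx, hu]
  notMem_avail := by simp [altRun, probeAvail]

lemma exists_isAltPath (hnd : order.Nodup) {ustar : V} (hu : ustar ∈ order) (t : ℕ) :
    ∃ m p, IsAltPath G order ustar t m p := by
  induction t with
  | zero => exact ⟨0, _, isAltPath_zero hu⟩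
  | succ t ih =>
    obtain ⟨m, p, h⟩ := ih
    exact h.exists_succ hnd

end Probing

/-- Alternating path lemma with timestamps: at any time `t` of the greedy probing
process, the symmetric difference of the partial matchings `R^t(σ)` and `R^t(σ₋ᵤ*)` is an
alternating path `p 0, …, p m` starting at `u*` (even-indexed edges in `R^t(σ)`,
odd-indexed in `R^t(σ₋ᵤ*)`), ranks increase two steps at a time, and the available sets
differ exactly in the endpoint `p m`. -/
theorem stmt9 {V : Type*} [DecidableEq V] (G : SimpleGraph V) [DecidableRel G.Adj]
    (order : List V) (hnd : order.Nodup) (hall : ∀ v : V, v ∈ order) (ustar : V) (t : ℕ) :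
    ∃ (m : ℕ) (p : ℕ → V),
      p 0 = ustar ∧
      (∀ i ≤ m, ∀ j ≤ m, p i = p j → i = j) ∧
      symmDiff (matchEdges (probePartial G [] order t))
          (matchEdges (probePartial G [ustar] order t)) =
        {e : Sym2 V | ∃ i < m, e = s(p i, p (i + 1))} ∧
      (∀ i < m, Even i → s(p i, p (i + 1)) ∈ matchEdges (probePartial G [] order t)) ∧
      (∀ i < m, ¬ Even i →
        s(p i, p (i + 1)) ∈ matchEdges (probePartial G [ustar] order t)) ∧
      (∀ i, i + 2 ≤ m → order.idxOf (p i) < order.idxOf (p (i + 2))) ∧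
      symmDiff (probeAvail G [] order t) (probeAvail G [ustar] order t) = {p m} := by
  obtain ⟨m, p, h⟩ := exists_isAltPath (G := G) hnd (hall ustar) t
  refine ⟨m, p, h.zero, h.injOn, h.symmDiff_matchEdges, fun i hi he => ?_, fun i hi he => ?_,
    h.rank, h.symmDiff_probeAvail⟩ <;>
  simpa [altRun, he] using h.mem i hi
end

section
/- Let σ_{-u*} be a permutation on V \ {u*} under which Ranking matches u to v, and let σ be obtained by inserting u* at an arbitrary rank. If σ(u*) > σ(u), then u is matched in R(σ) to some vertex w with σ(w) ≤ σ(v). -/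
open List

variable {V : Type*}

/-!
Run Ranking without `u*` (on `P ++ Q`) and with `u*` (on `P ++ u* :: Q`) side by side through
the vertices `P` ranked before `u*`. Call a vertex dead if it is unmatched and all its neighbours
are matched; it then stays unmatched. Throughout, the two runs differ only along an alternating
path from `u*` whose current end `s`, ranked after `u*`, is matched in the first run only; on every
other vertex that is not dead in the first run, the runs agree on whether it is matched. Hence a
vertex of `P` either takes the same partner in both runs, or takes `s` in the second run, which
comes before its partner in the first. After `P` the first run never pairs a vertex of `P` again
(one still unmatched is dead), while the second run only adds pairs.
-/

namespace List

variable {α : Type*}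

theorem insertIdx_eq_take_append_cons_drop {l : List α} {i : ℕ} (a : α) (h : i ≤ l.length) :
    l.insertIdx i a = l.take i ++ a :: l.drop i := by
  induction l generalizing i with
  | nil => simp_all
  | cons b l ih => cases i <;> simp_all

theorem find?_append_cons_of_neg {P Q : List α} {p : α → Bool} {e : α} (he : p e = false) :
    (P ++ e :: Q).find? p = (P ++ Q).find? p := by
  simp [find?_append, find?_cons_of_neg, he]

variable [DecidableEq α]

theorem idxOf_le_of_find?_eq_some {l : List α} {p : α → Bool} {a b : α}
    (hb : l.find? p = some b) (ha : a ∈ l) (hpa : p a = true) : l.idxOf b ≤ l.idxOf a := by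
  obtain ⟨hpb, as, bs, rfl, has⟩ := find?_eq_some_iff_append.mp hb
  have hbas : b ∉ as := fun h => by simpa [hpb] using has b h
  have haas : a ∉ as := fun h => by simpa [hpa] using has a h
  simp [idxOf_append, hbas, haas]

theorem find?_eq_or_eq_some_of_imp {l : List α} {p q : α → Bool} {e : α}
    (hpq : ∀ x ∈ l, p x = true → q x = true)
    (hqp : ∀ x ∈ l, q x = true → p x = true ∨ x = e) :
    l.find? q = l.find? p ∨
      l.find? q = some e ∧ ∀ a, l.find? p = some a → l.idxOf e < l.idxOf a := by
  cases hq : l.find? q with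
  | none =>
    refine Or.inl (Eq.symm (find?_eq_none.mpr fun x hx hpx => ?_))
    exact find?_eq_none.mp hq x hx (hpq x hx hpx)
  | some b =>
    have hbl := mem_of_find?_eq_some hq
    have hqb := find?_some hq
    have hbefore : ∀ a, l.find? p = some a → l.idxOf b ≤ l.idxOf a := fun a ha =>
      have hal := mem_of_find?_eq_some ha
      idxOf_le_of_find?_eq_some hq hal (hpq a hal (find?_some ha))
    by_cases hpb : p b = true
    · obtain ⟨a, ha⟩ : ∃ a, l.find? p = some a := Option.ne_none_iff_exists'.mp
        fun h => find?_eq_none.mp h b hbl hpb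
      have hab : l.idxOf a ≤ l.idxOf b := idxOf_le_of_find?_eq_some ha hbl hpb
      have := (idxOf_inj hbl).mp (le_antisymm (hbefore a ha) hab)
      exact Or.inl (by rw [ha, this])
    · have hbe : b = e := (hqp b hbl hqb).resolve_left hpb
      subst hbe
      refine Or.inr ⟨rfl, fun a ha => lt_of_le_of_ne (hbefore a ha) fun h => ?_⟩
      exact hpb ((idxOf_inj hbl).mp h ▸ find?_some ha)

theorem idxOf_lt_idxOf_append_cons_iff {P Q : List α} {e x : α} (he : e ∉ P) :
    (P ++ e :: Q).idxOf x < (P ++ e :: Q).idxOf e ↔ x ∈ P := by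
  have hlt : x ∈ P → P.idxOf x < P.length := idxOf_lt_length_of_mem
  by_cases hx : x ∈ P <;> simp [idxOf_append, he, hx, hlt]

end List

namespace Ranking

def Paired (M : List (V × V)) (x y : V) : Prop := (x, y) ∈ M ∨ (y, x) ∈ M

theorem Paired.mono {M M' : List (V × V)} {x y : V} (h : Paired M x y) (hM : M ⊆ M') :
    Paired M' x y :=
  h.imp (@hM _) (@hM _)

variable [DecidableEq V] {G : SimpleGraph V} [DecidableRel G.Adj]

@[simp]
theorem isMatchedL_cons (a b x : V) (M : List (V × V)) :
    isMatchedL ((a, b) :: M) x = (decide (a = x) || decide (b = x) || isMatchedL M x) := rfl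

theorem isMatchedL_of_subset {M M' : List (V × V)} {x : V} (hM : M ⊆ M')
    (h : isMatchedL M x = true) : isMatchedL M' x = true := by
  simp only [isMatchedL, any_eq_true] at h ⊢
  obtain ⟨p, hp, hpx⟩ := h
  exact ⟨p, hM hp, hpx⟩

def avail (G : SimpleGraph V) [DecidableRel G.Adj] (M : List (V × V)) (y w : V) : Bool :=
  decide (G.Adj y w) && !isMatchedL M w

theorem avail_eq_true {M : List (V × V)} {y w : V} :
    avail G M y w = true ↔ G.Adj y w ∧ isMatchedL M w = false := by
  simp [avail]

variable {l : List V} {M : List (V × V)} {y : V}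

theorem rankingStepF_of_matched (h : isMatchedL M y = true) : rankingStepF G [] l M y = M := by
  simp [rankingStepF, h]

theorem rankingStepF_of_find?_eq_none (h : isMatchedL M y = false)
    (hf : l.find? (avail G M y) = none) : rankingStepF G [] l M y = M := by
  simp only [rankingStepF, h, not_mem_nil, decide_false, Bool.not_false, Bool.and_true]
  rw [show (fun x => decide (G.Adj y x) && !isMatchedL M x) = avail G M y from rfl, hf]
  simp

theorem rankingStepF_of_find?_eq_some {w : V} (h : isMatchedL M y = false)
    (hf : l.find? (avail G M y) = some w) : rankingStepF G [] l M y = (y, w) :: M := by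
  simp only [rankingStepF, h, not_mem_nil, decide_false, Bool.not_false, Bool.and_true]
  rw [show (fun x => decide (G.Adj y x) && !isMatchedL M x) = avail G M y from rfl, hf]
  simp

theorem subset_rankingStepF : M ⊆ rankingStepF G [] l M y := by
  cases hM : isMatchedL M y
  · cases hf : l.find? (avail G M y) with
    | none => rw [rankingStepF_of_find?_eq_none hM hf]; exact Subset.refl M
    | some w => rw [rankingStepF_of_find?_eq_some hM hf]; exact subset_cons_self _ _
  · rw [rankingStepF_of_matched hM]; exact Subset.refl M

theorem subset_foldl_rankingStepF (L : List V) : M ⊆ L.foldl (rankingStepF G [] l) M := by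
  induction L generalizing M with
  | nil => exact Subset.refl M
  | cons y L ih => exact List.Subset.trans subset_rankingStepF ih

def Dead (G : SimpleGraph V) [DecidableRel G.Adj] (l : List V) (M : List (V × V)) (x : V) :
    Prop :=
  isMatchedL M x = false ∧ ∀ w ∈ l, G.Adj x w → isMatchedL M w = true

theorem find?_avail_eq_none_iff (h : isMatchedL M y = false) :
    l.find? (avail G M y) = none ↔ Dead G l M y := by
  simp [Dead, h, avail_eq_true]

theorem not_dead_of_adj {x : V} (hy : y ∈ l) (hyM : isMatchedL M y = false) (hyx : G.Adj y x) :
    ¬Dead G l M x :=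
  fun hd => by simp [hd.2 y hy hyx.symm] at hyM

theorem Dead.cons {x a b : V} (hd : Dead G l M x) (ha : a ≠ x) (hb : b ≠ x) :
    Dead G l ((a, b) :: M) x :=
  ⟨by simp [ha, hb, hd.1],
    fun w hw hxw => isMatchedL_of_subset (subset_cons_self _ _) (hd.2 w hw hxw)⟩

theorem Dead.rankingStep {x : V} (hy : y ∈ l) (hd : Dead G l M x) :
    Dead G l (rankingStepF G [] l M y) x := by
  cases hM : isMatchedL M y
  · cases hf : l.find? (avail G M y) with
    | none => rwa [rankingStepF_of_find?_eq_none hM hf]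
    | some w =>
      rw [rankingStepF_of_find?_eq_some hM hf]
      have hyw := (avail_eq_true.mp (find?_some hf)).1
      refine hd.cons (fun hyx => ?_) (fun hwx => not_dead_of_adj hy hM hyw (hwx ▸ hd))
      subst hyx
      simp [(find?_avail_eq_none_iff hM).mpr hd] at hf
  · rwa [rankingStepF_of_matched hM]

def Blocked (G : SimpleGraph V) [DecidableRel G.Adj] (l : List V) (S : Set V)
    (M : List (V × V)) : Prop :=
  ∀ x ∈ S, isMatchedL M x = false → Dead G l M x

theorem Blocked.rankingStep {S : Set V} (hy : y ∈ l) (h : Blocked G l S M) :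
    Blocked G l (insert y S) (rankingStepF G [] l M y) := by
  rintro x (rfl | hx) hxM
  · cases hM : isMatchedL M x
    · cases hf : l.find? (avail G M x) with
      | none =>
        rw [rankingStepF_of_find?_eq_none hM hf] at hxM ⊢
        exact (find?_avail_eq_none_iff hM).mp hf
      | some w => simp [rankingStepF_of_find?_eq_some hM hf] at hxM
    · simp [rankingStepF_of_matched hM, hM] at hxM
  · refine (h x hx ?_).rankingStep hy
    cases hM : isMatchedL M x
    · rfl
    · simp [isMatchedL_of_subset subset_rankingStepF hM] at hxM

theorem Blocked.foldl {S : Set V} {L : List V} (hL : ∀ y ∈ L, y ∈ l) (h : Blocked G l S M) :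
    Blocked G l (S ∪ {x | x ∈ L}) (L.foldl (rankingStepF G [] l) M) := by
  induction L generalizing S M with
  | nil => simpa using h
  | cons y L ih =>
    have := ih (fun z hz => hL z (mem_cons_of_mem y hz)) (h.rankingStep (hL y mem_cons_self))
    have hS : S ∪ {x | x ∈ y :: L} = insert y S ∪ {x | x ∈ L} := by
      ext x
      simp only [Set.mem_union, Set.mem_insert_iff, Set.mem_ofPred_eq, mem_cons]
      tauto
    rwa [foldl_cons, hS]

theorem Blocked.mem_rankingStep {S : Set V} {p : V × V} (hy : y ∈ l) (h : Blocked G l S M)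
    (hp : p ∈ rankingStepF G [] l M y) : p ∈ M ∨ p.1 ∉ S ∧ p.2 ∉ S := by
  cases hM : isMatchedL M y
  · cases hf : l.find? (avail G M y) with
    | none => rw [rankingStepF_of_find?_eq_none hM hf] at hp; exact Or.inl hp
    | some w =>
      rw [rankingStepF_of_find?_eq_some hM hf, mem_cons] at hp
      rcases hp with rfl | hp
      swap
      · exact Or.inl hp
      have hwa := find?_some hf
      refine Or.inr ⟨fun hyS => ?_, fun hwS => ?_⟩
      · simp [(find?_avail_eq_none_iff hM).mpr (h y hyS hM)] at hf
      · exact not_dead_of_adj hy hM (avail_eq_true.mp hwa).1 (h w hwS (avail_eq_true.mp hwa).2)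
  · rw [rankingStepF_of_matched hM] at hp; exact Or.inl hp

theorem Blocked.mem_foldl {S : Set V} {L : List V} {p : V × V} (hL : ∀ y ∈ L, y ∈ l)
    (h : Blocked G l S M) (hp : p ∈ L.foldl (rankingStepF G [] l) M) :
    p ∈ M ∨ p.1 ∉ S ∧ p.2 ∉ S := by
  induction L generalizing S M with
  | nil => exact Or.inl hp
  | cons y L ih =>
    have hy := hL y mem_cons_self
    rcases ih (fun z hz => hL z (mem_cons_of_mem y hz)) (h.rankingStep hy) hp with hp | hp
    · exact h.mem_rankingStep hy hp
    · exact Or.inr ⟨fun h1 => hp.1 (Set.mem_insert_of_mem y h1),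
        fun h2 => hp.2 (Set.mem_insert_of_mem y h2)⟩

theorem Blocked.paired_of_paired_foldl {S : Set V} {L : List V} {x v : V}
    (hL : ∀ y ∈ L, y ∈ l) (h : Blocked G l S M) (hx : x ∈ S)
    (hp : Paired (L.foldl (rankingStepF G [] l) M) x v) : Paired M x v := by
  rcases hp with hp | hp
  · exact Or.inl ((h.mem_foldl hL hp).resolve_right fun hn => hn.1 hx)
  · exact Or.inr ((h.mem_foldl hL hp).resolve_right fun hn => hn.2 hx)

theorem paired_cons_iff {a b x v : V} :
    Paired ((a, b) :: M) x v ↔ x = a ∧ v = b ∨ x = b ∧ v = a ∨ Paired M x v := by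
  simp only [Paired, mem_cons, Prod.mk.injEq]
  tauto

variable {l' : List V} {e : V} {MA MB : List (V × V)}

def Dominates (l' : List V) (e : V) (MA MB : List (V × V)) : Prop :=
  ∀ x v, Paired MA x v → l'.idxOf x < l'.idxOf e →
    ∃ w, Paired MB x w ∧ l'.idxOf w ≤ l'.idxOf v

theorem Dominates.mono {MB' : List (V × V)} (h : Dominates l' e MA MB) (hM : MB ⊆ MB') :
    Dominates l' e MA MB' := fun x v hxv hx =>
  let ⟨w, hw, hwv⟩ := h x v hxv hx
  ⟨w, hw.mono hM, hwv⟩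

theorem Dominates.cons_same {w : V} (h : Dominates l' e MA MB) :
    Dominates l' e ((y, w) :: MA) ((y, w) :: MB) := by
  intro x v hxv hx
  rcases paired_cons_iff.mp hxv with ⟨rfl, rfl⟩ | ⟨rfl, rfl⟩ | hxv
  · exact ⟨v, Or.inl mem_cons_self, le_rfl⟩
  · exact ⟨v, Or.inr mem_cons_self, le_rfl⟩
  · exact (h.mono (subset_cons_self _ _)) x v hxv hx

theorem Dominates.cons_of_le_of_lt {s a : V} (h : Dominates l' e MA MB)
    (hes : l'.idxOf e ≤ l'.idxOf s) (hsa : l'.idxOf s < l'.idxOf a) :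
    Dominates l' e ((y, a) :: MA) ((y, s) :: MB) := by
  intro x v hxv hx
  rcases paired_cons_iff.mp hxv with ⟨rfl, rfl⟩ | ⟨rfl, rfl⟩ | hxv
  · exact ⟨s, Or.inl mem_cons_self, hsa.le⟩
  · omega
  · exact (h.mono (subset_cons_self _ _)) x v hxv hx

/-- `s` is the end of the alternating path from `e` along which the run with `e` (giving `MB`)
differs from the run without it (giving `MA`); `s = e` while this path is empty. -/
def IsSpare (G : SimpleGraph V) [DecidableRel G.Adj] (l l' : List V) (e : V)
    (MA MB : List (V × V)) (s : V) : Prop :=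
  l'.idxOf e ≤ l'.idxOf s ∧
    (s ≠ e → isMatchedL MB e = true ∧ isMatchedL MA s = true ∧ isMatchedL MB s = false) ∧
    ∀ x, x ≠ e → x ≠ s → ¬Dead G l MA x → isMatchedL MB x = isMatchedL MA x

variable {s : V}

theorem IsSpare.rankingStepF_eq_of_matched (hs : IsSpare G l l' e MA MB s) (hye : y ≠ e)
    (hys : y ≠ s) (h : isMatchedL MA y = true ∨ isMatchedL MB y = true) :
    rankingStepF G [] l MA y = MA ∧ rankingStepF G [] l' MB y = MB := by
  have hagree := hs.2.2 y hye hys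
  by_cases hyA : isMatchedL MA y = true
  · have hyB : isMatchedL MB y = true := by rw [hagree (by simp [Dead, hyA]), hyA]
    exact ⟨rankingStepF_of_matched hyA, rankingStepF_of_matched hyB⟩
  · have hyB : isMatchedL MB y = true := h.resolve_left hyA
    rw [Bool.not_eq_true] at hyA
    have hyd : Dead G l MA y := by_contra fun hd => by simpa [hyA, hyB] using hagree hd
    exact ⟨rankingStepF_of_find?_eq_none hyA ((find?_avail_eq_none_iff hyA).mpr hyd),
      rankingStepF_of_matched hyB⟩

theorem IsSpare.cons_same {w : V} (hs : IsSpare G l l' e MA MB s)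
    (hw : avail G MA y w = true) (hwe : w ≠ e) (hys : y ≠ s) :
    IsSpare G l l' e ((y, w) :: MA) ((y, w) :: MB) s := by
  have hwA := (avail_eq_true.mp hw).2
  have hws : w ≠ s := fun hws => by
    subst hws
    simp [(hs.2.1 hwe).2.1] at hwA
  refine ⟨hs.1, fun hse => ?_, fun x hxe hxs hxd => ?_⟩
  · obtain ⟨h1, h2, h3⟩ := hs.2.1 hse
    simp [h1, h2, h3, hys, hws]
  · by_cases hx : x = y ∨ x = w
    · rcases hx with rfl | rfl <;> simp
    · obtain ⟨hxy, hxw⟩ := not_or.mp hx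
      have := hs.2.2 x hxe hxs fun hd => hxd (hd.cons (Ne.symm hxy) (Ne.symm hxw))
      simp [Ne.symm hxy, Ne.symm hxw, this]

theorem IsSpare.cons_of_dead (hs : IsSpare G l l' e MA MB s) (hyd : Dead G l MA y) :
    IsSpare G l l' e MA ((y, s) :: MB) e := by
  refine ⟨le_rfl, fun h => absurd rfl h, fun x hxe _ hxd => ?_⟩
  have hxy : y ≠ x := fun h => hxd (h ▸ hyd)
  by_cases hxs : x = s
  · subst hxs
    simp [(hs.2.1 hxe).2.1]
  · simp [hxy, Ne.symm hxs, hs.2.2 x hxe hxs hxd]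

theorem IsSpare.cons_of_lt {a : V} (hs : IsSpare G l l' e MA MB s) (hy : y ∈ l)
    (hyA : isMatchedL MA y = false) (ha : avail G MA y a = true) (hae : a ≠ e)
    (hsa : l'.idxOf s < l'.idxOf a) :
    IsSpare G l l' e ((y, a) :: MA) ((y, s) :: MB) a := by
  obtain ⟨hya, haA⟩ := avail_eq_true.mp ha
  have has : a ≠ s := fun h => (h ▸ hsa).false
  have haB : isMatchedL MB a = false :=
    (hs.2.2 a hae has (not_dead_of_adj hy hyA hya)).trans haA
  refine ⟨hs.1.trans hsa.le, fun _ => ⟨?_, by simp, by simp [hya.ne, Ne.symm has, haB]⟩,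
    fun x hxe hxa hxd => ?_⟩
  · by_cases hse : s = e
    · simp [hse]
    · simp [(hs.2.1 hse).1]
  · by_cases hxy : x = y
    · simp [hxy]
    by_cases hxs : x = s
    · subst hxs
      simp [(hs.2.1 hxe).2.1]
    · have := hs.2.2 x hxe hxs fun hd => hxd (hd.cons (Ne.symm hxy) (Ne.symm hxa))
      simp [Ne.symm hxy, Ne.symm hxa, Ne.symm hxs, this]

variable {P Q : List V}

theorem IsSpare.find?_avail_eq_or (hs : IsSpare G (P ++ Q) (P ++ e :: Q) e MA MB s)
    (he : e ∉ P ++ Q) (hy : y ∈ P ++ Q) (hyA : isMatchedL MA y = false) :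
    (P ++ e :: Q).find? (avail G MB y) = (P ++ Q).find? (avail G MA y) ∨
      (P ++ e :: Q).find? (avail G MB y) = some s ∧
        ∀ a, (P ++ Q).find? (avail G MA y) = some a →
          (P ++ e :: Q).idxOf s < (P ++ e :: Q).idxOf a := by
  have hlift : (P ++ e :: Q).find? (fun x => avail G MA y x && !decide (x = e)) =
      (P ++ Q).find? (avail G MA y) := by
    rw [find?_append_cons_of_neg (by simp)]
    exact find?_congr fun x hx => by simp [ne_of_mem_of_not_mem hx he]
  have hagree : ∀ x, x ≠ e → x ≠ s → G.Adj y x → avail G MB y x = avail G MA y x :=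
    fun x hxe hxs hyx => by simp [avail, hs.2.2 x hxe hxs (not_dead_of_adj hy hyA hyx)]
  rw [← hlift]
  refine find?_eq_or_eq_some_of_imp (fun x _ hpx => ?_) (fun x _ hqx => ?_)
  · simp only [Bool.and_eq_true, Bool.not_eq_true', decide_eq_false_iff_not] at hpx
    obtain ⟨hyx, hxA⟩ := avail_eq_true.mp hpx.1
    have hxs : x ≠ s := fun hxs => by
      subst hxs
      simp [(hs.2.1 hpx.2).2.1] at hxA
    rw [hagree x hpx.2 hxs hyx]
    exact hpx.1
  · by_cases hxs : x = s
    · exact Or.inr hxs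
    have hxe : x ≠ e := by
      rintro rfl
      simp [avail, (hs.2.1 (Ne.symm hxs)).1] at hqx
    have hyx := (avail_eq_true.mp hqx).1
    left
    simp [← hagree x hxe hxs hyx, hqx, hxe]

def Coupled (G : SimpleGraph V) [DecidableRel G.Adj] (l l' : List V) (e : V)
    (MA MB : List (V × V)) : Prop :=
  Dominates l' e MA MB ∧ ∃ s, IsSpare G l l' e MA MB s

theorem coupled_nil : Coupled G l l' e [] [] :=
  ⟨fun _ _ h => by simp [Paired] at h, e, le_rfl, fun h => absurd rfl h, fun _ _ _ _ => rfl⟩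

theorem Coupled.rankingStep (he : e ∉ P ++ Q) (hy : y ∈ P)
    (h : Coupled G (P ++ Q) (P ++ e :: Q) e MA MB) :
    Coupled G (P ++ Q) (P ++ e :: Q) e
      (rankingStepF G [] (P ++ Q) MA y) (rankingStepF G [] (P ++ e :: Q) MB y) := by
  obtain ⟨hdom, s, hs⟩ := h
  have hyl : y ∈ P ++ Q := mem_append_left Q hy
  have hye : (P ++ e :: Q).idxOf y < (P ++ e :: Q).idxOf e :=
    (idxOf_lt_idxOf_append_cons_iff fun h => he (mem_append_left Q h)).mpr hy
  have hys : y ≠ s := fun h => by have := hs.1; subst h; omega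
  by_cases hm : isMatchedL MA y = true ∨ isMatchedL MB y = true
  · obtain ⟨hA, hB⟩ := hs.rankingStepF_eq_of_matched (fun h => by subst h; omega) hys hm
    rw [hA, hB]
    exact ⟨hdom, s, hs⟩
  obtain ⟨hyA, hyB⟩ : isMatchedL MA y = false ∧ isMatchedL MB y = false := by simpa using hm
  rcases hs.find?_avail_eq_or he hyl hyA with hsame | ⟨hspare, hlater⟩
  · cases hf : (P ++ Q).find? (avail G MA y) with
    | none =>
      rw [rankingStepF_of_find?_eq_none hyA hf, rankingStepF_of_find?_eq_none hyB (hsame.trans hf)]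
      exact ⟨hdom, s, hs⟩
    | some w =>
      rw [rankingStepF_of_find?_eq_some hyA hf, rankingStepF_of_find?_eq_some hyB (hsame.trans hf)]
      exact ⟨hdom.cons_same, s, hs.cons_same (find?_some hf)
        (ne_of_mem_of_not_mem (mem_of_find?_eq_some hf) he) hys⟩
  · rw [rankingStepF_of_find?_eq_some hyB hspare]
    cases hf : (P ++ Q).find? (avail G MA y) with
    | none =>
      rw [rankingStepF_of_find?_eq_none hyA hf]
      exact ⟨hdom.mono (subset_cons_self _ _), e,
        hs.cons_of_dead ((find?_avail_eq_none_iff hyA).mp hf)⟩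
    | some a =>
      rw [rankingStepF_of_find?_eq_some hyA hf]
      exact ⟨hdom.cons_of_le_of_lt hs.1 (hlater a hf), a, hs.cons_of_lt hyl hyA (find?_some hf)
        (ne_of_mem_of_not_mem (mem_of_find?_eq_some hf) he) (hlater a hf)⟩

theorem Coupled.foldl (he : e ∉ P ++ Q) {L : List V} (hL : ∀ y ∈ L, y ∈ P)
    (h : Coupled G (P ++ Q) (P ++ e :: Q) e MA MB) :
    Coupled G (P ++ Q) (P ++ e :: Q) e
      (L.foldl (rankingStepF G [] (P ++ Q)) MA) (L.foldl (rankingStepF G [] (P ++ e :: Q)) MB) := by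
  induction L generalizing MA MB with
  | nil => exact h
  | cons y L ih =>
    exact ih (fun z hz => hL z (mem_cons_of_mem y hz)) (h.rankingStep he (hL y mem_cons_self))

theorem exists_paired_le_of_idxOf_lt {u v : V} (he : e ∉ P ++ Q)
    (huv : Paired (rankingList G (P ++ Q)) u v)
    (hu : (P ++ e :: Q).idxOf u < (P ++ e :: Q).idxOf e) :
    ∃ w, Paired (rankingList G (P ++ e :: Q)) u w ∧
      (P ++ e :: Q).idxOf w ≤ (P ++ e :: Q).idxOf v := by
  have huP : u ∈ P := (idxOf_lt_idxOf_append_cons_iff fun h => he (mem_append_left Q h)).mp hu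
  have hPl : ∀ y ∈ P, y ∈ P ++ Q := fun y hy => mem_append_left Q hy
  have hblocked : Blocked G (P ++ Q) {x | x ∈ P} (P.foldl (rankingStepF G [] (P ++ Q)) []) := by
    simpa using (show Blocked G (P ++ Q) ∅ [] from fun _ h => h.elim).foldl hPl
  have hcoupled := (coupled_nil (G := G)).foldl he (L := P) fun _ => id
  unfold rankingList at huv ⊢
  rw [foldl_append] at huv ⊢
  have hQl : ∀ y ∈ Q, y ∈ P ++ Q := fun y hy => mem_append_right P hy
  obtain ⟨w, hw, hwv⟩ := hcoupled.1 u v (hblocked.paired_of_paired_foldl hQl huP huv) hu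
  exact ⟨w, hw.mono (subset_foldl_rankingStepF _), hwv⟩

end Ranking

theorem stmt11_general {V : Type*} [DecidableEq V] (G : SimpleGraph V) [DecidableRel G.Adj]
    (order : List V) (ustar : V) (hu : ustar ∉ order)
    (u v : V) (hmatch : matchedTo G order u v)
    (i : ℕ) (hi : i ≤ order.length)
    (hrank : (order.insertIdx i ustar).idxOf u < (order.insertIdx i ustar).idxOf ustar) :
    ∃ w : V, matchedTo G (order.insertIdx i ustar) u w ∧
      (order.insertIdx i ustar).idxOf w ≤ (order.insertIdx i ustar).idxOf v := by
  rw [insertIdx_eq_take_append_cons_drop ustar hi] at hrank ⊢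
  rw [← take_append_drop i order] at hu hmatch
  exact Ranking.exists_paired_le_of_idxOf_lt hu hmatch hrank

/-- If Ranking on `σ₋ᵤ*` matches `u` to `v`, and `σ` is obtained by inserting `u*` at an
arbitrary rank with `σ(u*) > σ(u)`, then in `R(σ)` the vertex `u` is matched to some `w`
with `σ(w) ≤ σ(v)`. -/
theorem stmt11 {V : Type*} [DecidableEq V] (G : SimpleGraph V) [DecidableRel G.Adj]
    (order : List V) (hnd : order.Nodup) (ustar : V) (hu : ustar ∉ order)
    (hall : ∀ x : V, x ≠ ustar → x ∈ order)
    (u v : V) (hmatch : matchedTo G order u v)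
    (i : ℕ) (hi : i ≤ order.length)
    (hrank : (order.insertIdx i ustar).idxOf u < (order.insertIdx i ustar).idxOf ustar) :
    ∃ w : V, matchedTo G (order.insertIdx i ustar) u w ∧
      (order.insertIdx i ustar).idxOf w ≤ (order.insertIdx i ustar).idxOf v :=
  stmt11_general G order ustar hu u v hmatch i hi hrank
end

section
/- Monotonicity without backup: Let σ be a permutation on V \ {u*} under which Ranking matches u to v and u has no backup (removing v leaves u unmatched). Then for every rank i with σ(v) ≤ i ≤ |V|−1, in the permutation σ_v^i (v moved to rank i, other relative orders preserved), Ranking still matches u to v and u still has no backup. -/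
open List

variable {V : Type*}

/-!
Let `E` be `σ` with `v` removed. Ranking on `E` with `v` inserted at position `i` behaves
exactly as Ranking on `E` until `u` or `v` is processed, because no earlier vertex chooses `v`:
before position `σ(v)` such a choice would also happen in the run on `σ`, where `v` ends up
with `u`; after it, the vertex would be a free neighbour of `v` preceding `u`, which `v` passed
over when it chose `u` at position `σ(v)`. If `u` comes first, it has no free neighbour in `E`
(it has no backup) and takes `v`. If `v` comes first, its free neighbours form a subset of
those it had at position `σ(v)`, still containing `u`, so it takes `u` again. Removing `v` from
`σ_v^i` gives `E` back, so `u` still has no backup.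
-/

namespace List

variable {α : Type*} {p q : α → Bool} {a b : α}

theorem find?_insertIdx_of_ne_some {l : List α} {j : ℕ}
    (h : (l.insertIdx j a).find? p ≠ some a) : (l.insertIdx j a).find? p = l.find? p := by
  induction l generalizing j with
  | nil =>
    cases j with
    | zero => cases hpa : p a <;> simp_all
    | succ j => simp
  | cons x t ih =>
    cases j with
    | zero => cases hpa : p a <;> simp_all
    | succ j =>
      rw [insertIdx_succ_cons] at h ⊢
      cases hpx : p x
      · rw [find?_cons_of_neg (by simp [hpx])] at h ⊢
        rw [find?_cons_of_neg (by simp [hpx]), ih h]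
      · rw [find?_cons_of_pos hpx, find?_cons_of_pos hpx]

theorem find?_insertIdx_of_eq_false {l : List α} {j : ℕ} (ha : p a = false) :
    (l.insertIdx j a).find? p = l.find? p :=
  find?_insertIdx_of_ne_some fun h => by simp [find?_some h] at ha

theorem find?_insertIdx_eq_some_of_le {l : List α} {j k : ℕ} (hjk : j ≤ k)
    (h : (l.insertIdx k a).find? p = some a) : (l.insertIdx j a).find? p = some a := by
  induction l generalizing j k with
  | nil => cases j <;> cases k <;> simp_all
  | cons x t ih =>
    cases j with
    | zero => simp [find?_some h]
    | succ j =>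
      obtain ⟨k, rfl⟩ : ∃ k', k = k' + 1 := ⟨k - 1, by omega⟩
      rw [insertIdx_succ_cons] at h ⊢
      cases hpx : p x
      · rw [find?_cons_of_neg (by simp [hpx])] at h ⊢
        exact ih (by omega) h
      · rwa [find?_cons_of_pos hpx] at h ⊢

theorem find?_insertIdx_eq_some {l : List α} {j : ℕ} (hj : j ≤ l.length)
    (hl : l.find? p = none) (ha : p a = true) : (l.insertIdx j a).find? p = some a := by
  induction l generalizing j with
  | nil => cases j <;> simp_all
  | cons x t ih =>
    cases j with
    | zero => simp [ha]
    | succ j =>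
      have hpx : p x = false := by simpa using find?_eq_none.1 hl x mem_cons_self
      rw [find?_cons_of_neg (by simp [hpx])] at hl
      rw [insertIdx_succ_cons, find?_cons_of_neg (by simp [hpx])]
      exact ih (by simpa using hj) hl

theorem find?_eq_some_of_imp {l : List α} (hqp : ∀ x, q x = true → p x = true)
    (h : l.find? p = some b) (hb : q b = true) : l.find? q = some b := by
  induction l with
  | nil => simp at h
  | cons x t ih =>
    cases hpx : p x
    · have hqx : q x = false := by simpa using mt (hqp x) (by simp [hpx])
      rw [find?_cons_of_neg (by simp [hpx])] at h
      rw [find?_cons_of_neg (by simp [hqx]), ih h]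
    · rw [find?_cons_of_pos hpx] at h
      cases h
      rw [find?_cons_of_pos hb]

theorem apply_getElem_eq_false_of_lt_idxOf [BEq α] [LawfulBEq α] {l : List α} {n : ℕ}
    (h : l.find? p = some b) (hn : n < l.idxOf b) (hnl : n < l.length) : p l[n] = false := by
  induction l generalizing n with
  | nil => simp at hnl
  | cons x t ih =>
    cases hpx : p x
    · cases n with
      | zero => simpa using hpx
      | succ n =>
        have hxb : x ≠ b := by rintro rfl; simp [find?_some h] at hpx
        rw [find?_cons_of_neg (by simp [hpx])] at h
        rw [idxOf_cons_ne _ (by simpa using hxb)] at hn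
        exact ih h (by omega) (by simpa using hnl)
    · rw [find?_cons_of_pos hpx] at h
      cases h
      simp at hn

theorem getElem_ne_of_lt_idxOf [BEq α] [LawfulBEq α] {l : List α} {n : ℕ} (hn : n < l.idxOf a)
    (hnl : n < l.length) : l[n] ≠ a := by
  simpa using not_of_lt_findIdx hn

theorem insertIdx_erase_idxOf [DecidableEq α] {l : List α} (ha : a ∈ l) :
    (l.erase a).insertIdx (l.idxOf a) a = l := by
  have hlt := idxOf_lt_length_of_mem ha
  calc (l.erase a).insertIdx (l.idxOf a) a
      = (l.eraseIdx (l.idxOf a)).insertIdx (l.idxOf a) l[l.idxOf a] := by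
        rw [eraseIdx_idxOf_eq_erase, getElem_idxOf]
    _ = l := insertIdx_eraseIdx_getElem hlt

theorem erase_insertIdx_of_not_mem [DecidableEq α] {l : List α} (ha : a ∉ l) (j : ℕ) :
    (l.insertIdx j a).erase a = l := by
  induction l generalizing j with
  | nil => cases j <;> simp
  | cons x t ih =>
    cases j with
    | zero => simp
    | succ j =>
      rw [insertIdx_succ_cons, erase_cons_tail (by simpa using Ne.symm (ne_of_not_mem_cons ha)),
        ih (not_mem_of_not_mem_cons ha)]

end List

section Ranking

variable [DecidableEq V] (G : SimpleGraph V) [DecidableRel G.Adj]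

theorem isMatchedL_eq_true_iff {M : List (V × V)} {a : V} :
    isMatchedL M a = true ↔ ∃ p ∈ M, p.1 = a ∨ p.2 = a := by
  simp [isMatchedL]

theorem isMatchedL_mono {M M' : List (V × V)} (h : M <:+ M') {a : V}
    (ha : isMatchedL M a = true) : isMatchedL M' a = true := by
  obtain ⟨p, hp, hpa⟩ := isMatchedL_eq_true_iff.1 ha
  exact isMatchedL_eq_true_iff.2 ⟨p, h.subset hp, hpa⟩

theorem isMatchedL_rankingList_iff {O : List V} {a : V} :
    isMatchedL (rankingList G O) a = true ↔ isMatchedInRanking G O a := by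
  simp only [isMatchedL_eq_true_iff, isMatchedInRanking, matchedTo]
  constructor
  · rintro ⟨⟨x, y⟩, hp, rfl | rfl⟩
    exacts [⟨y, Or.inl hp⟩, ⟨x, Or.inr hp⟩]
  · rintro ⟨w, hw | hw⟩
    exacts [⟨_, hw, Or.inl rfl⟩, ⟨_, hw, Or.inr rfl⟩]

def canMatch (M : List (V × V)) (x w : V) : Bool :=
  decide (G.Adj x w) && !isMatchedL M w

theorem canMatch_eq_true_iff {M : List (V × V)} {x w : V} :
    canMatch G M x w = true ↔ G.Adj x w ∧ isMatchedL M w = false := by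
  simp [canMatch]

theorem canMatch_self (M : List (V × V)) (x : V) : canMatch G M x x = false := by
  simp [canMatch]

theorem canMatch_of_suffix {M M' : List (V × V)} (h : M <:+ M') {x w : V}
    (hw : canMatch G M' x w = true) : canMatch G M x w = true := by
  rw [canMatch_eq_true_iff] at hw ⊢
  refine ⟨hw.1, ?_⟩
  by_contra hM
  simpa [isMatchedL_mono h (by simpa using hM)] using hw.2

theorem rankingStepF_nil (O : List V) (M : List (V × V)) (x : V) :
    rankingStepF G [] O M x =
      if isMatchedL M x = true then M
      else (O.find? (canMatch G M x)).elim M (fun w => (x, w) :: M) := by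
  unfold rankingStepF canMatch
  simp only [not_mem_nil, decide_false, Bool.not_false, Bool.and_true, false_or]
  split
  · rfl
  · split <;> rename_i hfind <;> rw [hfind] <;> rfl

theorem rankingStepF_nil_congr {O O' : List V} {M : List (V × V)} {x : V}
    (h : isMatchedL M x = false → O.find? (canMatch G M x) = O'.find? (canMatch G M x)) :
    rankingStepF G [] O M x = rankingStepF G [] O' M x := by
  cases hx : isMatchedL M x <;> simp [rankingStepF_nil, hx, h]

theorem rankingStepF_nil_of_find?_eq_some {O : List V} {M : List (V × V)} {x w : V}
    (hx : isMatchedL M x = false) (hw : O.find? (canMatch G M x) = some w) :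
    rankingStepF G [] O M x = (x, w) :: M := by
  simp [rankingStepF_nil, hx, hw]

theorem rankingStepF_suffix (F O : List V) (M : List (V × V)) (x : V) :
    M <:+ rankingStepF G F O M x := by
  unfold rankingStepF
  split
  · exact suffix_refl M
  · split
    · exact suffix_cons _ M
    · exact suffix_refl M

theorem rankingPartialF_succ {F O : List V} {t : ℕ} (ht : t < O.length) :
    rankingPartialF G F O (t + 1) = rankingStepF G F O (rankingPartialF G F O t) O[t] := by
  simp only [rankingPartialF, take_add_one, getElem?_eq_getElem ht, Option.toList_some,
    foldl_append, foldl_cons, foldl_nil]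

theorem rankingPartialF_length (O : List V) :
    rankingPartialF G [] O O.length = rankingList G O := by
  simp [rankingPartialF, rankingList]

theorem suffix_foldl_rankingStepF (F O : List V) (l : List V) (M : List (V × V)) :
    M <:+ l.foldl (rankingStepF G F O) M := by
  induction l generalizing M with
  | nil => exact suffix_refl M
  | cons x l ih => exact (rankingStepF_suffix G F O M x).trans (ih _)

theorem rankingPartialF_suffix {F O : List V} {t t' : ℕ} (h : t ≤ t') :
    rankingPartialF G F O t <:+ rankingPartialF G F O t' := by
  obtain ⟨l, hl⟩ := take_prefix_take_left (l := O) h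
  simp only [rankingPartialF, ← hl, foldl_append]
  exact suffix_foldl_rankingStepF G F O l _

theorem rankingPartialF_suffix_rankingList (O : List V) (t : ℕ) :
    rankingPartialF G [] O t <:+ rankingList G O := by
  rcases le_total t O.length with h | h
  · rw [← rankingPartialF_length]
    exact rankingPartialF_suffix G h
  · simp [rankingPartialF, rankingList, take_of_length_le h]

theorem rankingPartialF_induction (P : List (V × V) → Prop) {F O : List V} (t : ℕ)
    (h0 : P []) (hstep : ∀ M x, x ∈ O → P M → P (rankingStepF G F O M x)) :
    P (rankingPartialF G F O t) := by
  suffices ∀ l : List V, l ⊆ O → ∀ M, P M → P (l.foldl (rankingStepF G F O) M) from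
    this _ (take_subset t O) [] h0
  intro l hl
  induction l with
  | nil => exact fun M hM => hM
  | cons x l ih =>
    exact fun M hM => ih (subset_of_cons_subset hl) _ (hstep M x (hl mem_cons_self) hM)

end Ranking

section Invariants

variable [DecidableEq V] {G : SimpleGraph V} [DecidableRel G.Adj]

theorem adj_and_mem_of_mem_rankingPartialF {O : List V} {t : ℕ} {p : V × V}
    (hp : p ∈ rankingPartialF G [] O t) : G.Adj p.1 p.2 ∧ p.1 ∈ O ∧ p.2 ∈ O := by
  refine rankingPartialF_induction G (F := [])
    (fun M => ∀ p ∈ M, G.Adj p.1 p.2 ∧ p.1 ∈ O ∧ p.2 ∈ O) t (by simp)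
    (fun M x hx hM => ?_) p hp
  rw [rankingStepF_nil]
  split
  · exact hM
  · cases hw : O.find? (canMatch G M x) with
    | none => exact hM
    | some w =>
      have hxw := ((canMatch_eq_true_iff G).1 (find?_some hw)).1
      simpa [hxw, hx, mem_of_find?_eq_some hw] using hM

def IsMatchingList (M : List (V × V)) : Prop :=
  ∀ p ∈ M, ∀ q ∈ M, ∀ a : V, (p.1 = a ∨ p.2 = a) → (q.1 = a ∨ q.2 = a) → p = q

theorem isMatchingList_cons {M : List (V × V)} {x w : V} (hM : IsMatchingList M)
    (hx : isMatchedL M x = false) (hw : isMatchedL M w = false) :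
    IsMatchingList ((x, w) :: M) := by
  have hfree : ∀ q ∈ M, ∀ a, (q.1 = a ∨ q.2 = a) → a ≠ x ∧ a ≠ w := by
    rintro q hq a hqa
    constructor <;> rintro rfl
    · simp [isMatchedL_eq_true_iff.2 ⟨q, hq, hqa⟩] at hx
    · simp [isMatchedL_eq_true_iff.2 ⟨q, hq, hqa⟩] at hw
  intro p hp q hq a hpa hqa
  rcases mem_cons.1 hp with rfl | hp <;> rcases mem_cons.1 hq with rfl | hq
  · rfl
  · have := hfree q hq a hqa
    rcases hpa with rfl | rfl <;> simp_all
  · have := hfree p hp a hpa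
    rcases hqa with rfl | rfl <;> simp_all
  · exact hM p hp q hq a hpa hqa

theorem isMatchingList_rankingPartialF (O : List V) (t : ℕ) :
    IsMatchingList (rankingPartialF G [] O t) := by
  refine rankingPartialF_induction G IsMatchingList t (by simp [IsMatchingList])
    fun M x _ hM => ?_
  rw [rankingStepF_nil]
  split
  · exact hM
  · rename_i hx
    cases hw : O.find? (canMatch G M x) with
    | none => exact hM
    | some w =>
      exact isMatchingList_cons hM (by simpa using hx)
        ((canMatch_eq_true_iff G).1 (find?_some hw)).2

theorem isMatchedL_rankingPartialF_of_not_mem {O : List V} {a : V} (ha : a ∉ O) (t : ℕ) :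
    isMatchedL (rankingPartialF G [] O t) a = false := by
  by_contra h
  obtain ⟨p, hp, rfl | rfl⟩ := isMatchedL_eq_true_iff.1 (Bool.not_eq_false _ ▸ h)
  exacts [ha (adj_and_mem_of_mem_rankingPartialF hp).2.1,
    ha (adj_and_mem_of_mem_rankingPartialF hp).2.2]

theorem isMatchedL_rankingPartialF_of_not_isMatchedInRanking {O : List V} {a : V}
    (ha : ¬ isMatchedInRanking G O a) (t : ℕ) :
    isMatchedL (rankingPartialF G [] O t) a = false := by
  by_contra h
  exact ha ((isMatchedL_rankingList_iff G).1
    (isMatchedL_mono (rankingPartialF_suffix_rankingList G O t) (by simpa using h)))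

namespace matchedTo

variable {O : List V} {a b c : V}

theorem symm (h : matchedTo G O a b) : matchedTo G O b a := Or.symm h

theorem adj (h : matchedTo G O a b) : G.Adj a b := by
  unfold matchedTo at h
  rw [← rankingPartialF_length] at h
  rcases h with h | h
  exacts [(adj_and_mem_of_mem_rankingPartialF h).1, (adj_and_mem_of_mem_rankingPartialF h).1.symm]

theorem mem_left (h : matchedTo G O a b) : a ∈ O := by
  unfold matchedTo at h
  rw [← rankingPartialF_length] at h
  rcases h with h | h
  exacts [(adj_and_mem_of_mem_rankingPartialF h).2.1, (adj_and_mem_of_mem_rankingPartialF h).2.2]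

theorem unique (hb : matchedTo G O a b) (hc : matchedTo G O a c) : b = c := by
  have hM := isMatchingList_rankingPartialF (G := G) O O.length
  rw [rankingPartialF_length] at hM
  rcases hb with hb | hb <;> rcases hc with hc | hc
  · simpa using hM _ hb _ hc a (Or.inl rfl) (Or.inl rfl)
  · have := hM _ hb _ hc a (Or.inl rfl) (Or.inr rfl); simp_all
  · have := hM _ hb _ hc a (Or.inr rfl) (Or.inl rfl); simp_all
  · simpa using hM _ hb _ hc a (Or.inr rfl) (Or.inr rfl)

end matchedTo

theorem matchedTo_of_find?_eq_some {O : List V} {n : ℕ} {M : List (V × V)} {x w : V}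
    (hn : n < O.length) (hM : rankingPartialF G [] O n = M) (hxn : O[n] = x)
    (hx : isMatchedL M x = false) (hw : O.find? (canMatch G M x) = some w) :
    matchedTo G O x w := by
  left
  refine (rankingPartialF_suffix_rankingList G O (n + 1)).subset ?_
  rw [rankingPartialF_succ G hn, hM, hxn, rankingStepF_nil_of_find?_eq_some G hx hw]
  exact mem_cons_self

end Invariants

section Insertion

variable [DecidableEq V] {G : SimpleGraph V} [DecidableRel G.Adj] {E : List V} {u v : V}
  {r i : ℕ}

theorem rankingPartialF_insertIdx_eq {j s : ℕ} (hsj : s ≤ j) (hjE : j ≤ E.length)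
    (havoid : ∀ n (hn : n < s),
      rankingPartialF G [] (E.insertIdx j v) n = rankingPartialF G [] E n →
      isMatchedL (rankingPartialF G [] E n) E[n] = false →
      (E.insertIdx j v).find? (canMatch G (rankingPartialF G [] E n) E[n]) ≠ some v) :
    rankingPartialF G [] (E.insertIdx j v) s = rankingPartialF G [] E s := by
  induction s with
  | zero => rfl
  | succ n ih =>
    have hn := ih (by omega) fun m hm => havoid m (by omega)
    have hnL : n < (E.insertIdx j v).length := by
      rw [length_insertIdx_of_le_length (by omega)]; omega
    rw [rankingPartialF_succ G hnL, rankingPartialF_succ G (by omega : n < E.length), hn,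
      getElem_insertIdx_of_lt (by omega)]
    exact rankingStepF_nil_congr G fun hx => find?_insertIdx_of_ne_some (havoid n (by omega) hn hx)

theorem find?_insertIdx_ne_some_of_lt_min (hr : r ≤ E.length)
    (hmatch : matchedTo G (E.insertIdx r v) u v) {n : ℕ} (hn : n < min (E.idxOf u) r)
    (hnE : n < E.length)
    (hagree : rankingPartialF G [] (E.insertIdx r v) n = rankingPartialF G [] E n)
    (hx : isMatchedL (rankingPartialF G [] E n) E[n] = false) :
    (E.insertIdx r v).find? (canMatch G (rankingPartialF G [] E n) E[n]) ≠ some v := by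
  intro hfind
  have hnL : n < (E.insertIdx r v).length := by
    rw [length_insertIdx_of_le_length hr]; omega
  have hxv := matchedTo_of_find?_eq_some hnL hagree (getElem_insertIdx_of_lt (by omega) _) hx hfind
  exact getElem_ne_of_lt_idxOf (by omega) hnE (hxv.symm.unique hmatch.symm)

theorem rankingPartialF_insertIdx_eq_of_le_min (hr : r ≤ E.length)
    (hmatch : matchedTo G (E.insertIdx r v) u v) {s : ℕ} (hs : s ≤ min (E.idxOf u) r) :
    rankingPartialF G [] (E.insertIdx r v) s = rankingPartialF G [] E s :=
  rankingPartialF_insertIdx_eq (by omega) hr fun n hn hagree hx =>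
    find?_insertIdx_ne_some_of_lt_min hr hmatch (by omega) _ hagree hx

theorem find?_insertIdx_canMatch_eq_some (hr : r ≤ E.length) (hvE : v ∉ E)
    (hmatch : matchedTo G (E.insertIdx r v) u v) (hnb : ¬ isMatchedInRanking G E u)
    (hrp : r ≤ E.idxOf u) :
    (E.insertIdx r v).find? (canMatch G (rankingPartialF G [] E r) v) = some u := by
  have hagree := rankingPartialF_insertIdx_eq_of_le_min hr hmatch (s := r) (by omega)
  have hrL : r < (E.insertIdx r v).length := by
    rw [length_insertIdx_of_le_length hr]; omega
  obtain ⟨w, hw⟩ := Option.isSome_iff_exists.1 <| find?_isSome.2 ⟨u, hmatch.mem_left,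
    (canMatch_eq_true_iff G).2
      ⟨hmatch.adj.symm, isMatchedL_rankingPartialF_of_not_isMatchedInRanking hnb r⟩⟩
  have hvw := matchedTo_of_find?_eq_some hrL hagree (getElem_insertIdx_self _)
    (isMatchedL_rankingPartialF_of_not_mem hvE r) hw
  rw [hw, hvw.unique hmatch.symm]

theorem rankingPartialF_insertIdx_eq_of_le_min_of_le (hri : r ≤ i) (hi : i ≤ E.length)
    (hvE : v ∉ E) (hmatch : matchedTo G (E.insertIdx r v) u v)
    (hnb : ¬ isMatchedInRanking G E u) {s : ℕ} (hs : s ≤ min (E.idxOf u) i) :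
    rankingPartialF G [] (E.insertIdx i v) s = rankingPartialF G [] E s := by
  refine rankingPartialF_insertIdx_eq (by omega) hi fun n hn _ hx hfind => ?_
  have hnE : n < E.length := by omega
  rcases lt_or_ge n r with hnr | hrn
  · exact find?_insertIdx_ne_some_of_lt_min (hri.trans hi) hmatch (by omega) hnE
      (rankingPartialF_insertIdx_eq_of_le_min (hri.trans hi) hmatch (by omega)) hx
      (find?_insertIdx_eq_some_of_le hri hfind)
  · -- at step `r` of the original run, `v` preferred `u` to `E[n]`, which precedes `u` in `E`;
    -- so `E[n]` was matched by then, although it is free at the later step `n`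
    have hvu := find?_insertIdx_canMatch_eq_some (hri.trans hi) hvE hmatch hnb (by omega)
    rw [find?_insertIdx_of_eq_false (canMatch_self G _ v)] at hvu
    have hfree : canMatch G (rankingPartialF G [] E n) v E[n] = true :=
      (canMatch_eq_true_iff G).2 ⟨((canMatch_eq_true_iff G).1 (find?_some hfind)).1.symm, hx⟩
    have := canMatch_of_suffix G (rankingPartialF_suffix G hrn) hfree
    rw [apply_getElem_eq_false_of_lt_idxOf hvu (by omega) hnE] at this
    exact Bool.false_ne_true this

theorem matchedTo_insertIdx_of_le (hri : r ≤ i) (hi : i ≤ E.length) (hvE : v ∉ E)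
    (hmatch : matchedTo G (E.insertIdx r v) u v) (hnb : ¬ isMatchedInRanking G E u) :
    matchedTo G (E.insertIdx i v) u v := by
  have hagree := rankingPartialF_insertIdx_eq_of_le_min_of_le hri hi hvE hmatch hnb le_rfl
  have hvfree := isMatchedL_rankingPartialF_of_not_mem (G := G) hvE
  have hufree := isMatchedL_rankingPartialF_of_not_isMatchedInRanking hnb
  have hlen : (E.insertIdx i v).length = E.length + 1 := length_insertIdx_of_le_length hi v
  rcases lt_or_ge (E.idxOf u) i with hpi | hip
  · rw [min_eq_left hpi.le] at hagree
    have hpE : E.idxOf u < E.length := by omega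
    have hnone : E.find? (canMatch G (rankingPartialF G [] E (E.idxOf u)) u) = none := by
      by_contra h
      obtain ⟨w, hw⟩ := Option.ne_none_iff_exists'.1 h
      exact hnb ⟨w, matchedTo_of_find?_eq_some hpE rfl (getElem_idxOf hpE) (hufree _) hw⟩
    exact matchedTo_of_find?_eq_some (by omega) hagree
      ((getElem_insertIdx_of_lt hpi _).trans (getElem_idxOf hpE)) (hufree _)
      (find?_insertIdx_eq_some hi hnone ((canMatch_eq_true_iff G).2 ⟨hmatch.adj, hvfree _⟩))
  · rw [min_eq_right hip] at hagree
    have hvu := find?_insertIdx_canMatch_eq_some (hri.trans hi) hvE hmatch hnb (hri.trans hip)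
    rw [find?_insertIdx_of_eq_false (canMatch_self G _ v),
      ← find?_insertIdx_of_eq_false (j := i) (canMatch_self G _ v)] at hvu
    have hvu' := find?_eq_some_of_imp
      (fun _ => canMatch_of_suffix G (rankingPartialF_suffix G hri)) hvu
      ((canMatch_eq_true_iff G).2 ⟨hmatch.adj.symm, hufree i⟩)
    exact (matchedTo_of_find?_eq_some (by omega) hagree (getElem_insertIdx_self _) (hvfree i)
      hvu').symm

end Insertion

/-- Monotonicity without backup: if Ranking on `σ` matches `u` to `v` and `u` has no
backup (removing `v` leaves `u` unmatched), then for every rank `i` with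
`σ(v) ≤ i ≤ |V| - 1`, in the permutation obtained by moving `v` to rank `i` Ranking still
matches `u` to `v` and `u` still has no backup. -/
theorem stmt17 {V : Type*} [DecidableEq V] (G : SimpleGraph V) [DecidableRel G.Adj]
    (order : List V) (hnd : order.Nodup) (u v : V) (hv : v ∈ order)
    (hmatch : matchedTo G order u v)
    (hnb : ¬ isMatchedInRanking G (order.erase v) u) :
    ∀ i : ℕ, order.idxOf v ≤ i → i ≤ order.length - 1 →
      matchedTo G ((order.erase v).insertIdx i v) u v ∧
      ¬ isMatchedInRanking G (((order.erase v).insertIdx i v).erase v) u := by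
  intro i hri hi
  have hvE : v ∉ order.erase v := hnd.not_mem_erase
  rw [← insertIdx_erase_idxOf hv] at hmatch
  rw [erase_insertIdx_of_not_mem hvE]
  exact ⟨matchedTo_insertIdx_of_le hri (by rw [length_erase_of_mem hv]; exact hi) hvE hmatch hnb,
    hnb⟩
end
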